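/- arXiv:1712.10097 — 13 statements merged into one kernel-verified Lean document; each statement's English description precedes it below -/
import Mathlib

section
/- Consider the WPCS reward-maximization problem P1-A with N sensors: maximize Σ_{n=1}^N a_n·log(1+ℓ_n) − c·T₀·Σ_{n=1}^N P_n over variables ℓ_n ≥ 0, t_n > 0, P_n ≥ 0, subject to Σ_{n=1}^N P_n ≤ P₀, the time constraints β_n·ℓ_n + t_n ≤ T, and the energy constraints α_n·ℓ_n + (t_n/h_n)·f(ℓ_n/(R_n·t_n)) ≤ η·P_n·h_n·T₀. If (ℓ*, t*, P*) is a maximizer of this problem, then for every n the energy constraint holds with equality: α_n·ℓ_n* + (t_n*/h_n)·f(ℓ_n*/(R_n·t_n*)) = η·P_n*·h_n·T₀. -/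
open Real Finset

/-- Transmission-power function `f(x) = N₀ (2^{x/B} - 1)`. -/
noncomputable def fRate (N0 B x : ℝ) : ℝ := N0 * ((2 : ℝ) ^ (x / B) - 1)

/-! If the energy constraint of sensor `n` were slack at a maximizer, lowering `Pₙ` to the
energy that sensor actually consumes would keep every constraint satisfied and decrease the
cost `c T₀ ∑ Pₘ`, so the reward would strictly increase. -/

lemma fRate_nonneg {N0 B x : ℝ} (hN0 : 0 ≤ N0) (hB : 0 ≤ B) (hx : 0 ≤ x) :
    0 ≤ fRate N0 B x :=
  mul_nonneg hN0 (sub_nonneg.2 (one_le_rpow (by norm_num) (div_nonneg hx hB)))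

lemma energy_nonneg {N0 B α h R ℓ t : ℝ} (hN0 : 0 ≤ N0) (hB : 0 ≤ B) (hα : 0 ≤ α)
    (hh : 0 ≤ h) (hR : 0 ≤ R) (hℓ : 0 ≤ ℓ) (ht : 0 ≤ t) :
    0 ≤ α * ℓ + (t / h) * fRate N0 B (ℓ / (R * t)) :=
  add_nonneg (mul_nonneg hα hℓ)
    (mul_nonneg (div_nonneg ht hh) (fRate_nonneg hN0 hB (div_nonneg hℓ (mul_nonneg hR ht))))

theorem energy_constraint_tight_at_optimum_general
    (N : ℕ)
    (N0 B c T0 P0 η T : ℝ)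
    (hN0 : 0 < N0) (hB : 0 < B) (hc : 0 < c) (hT0 : 0 < T0)
    (hη : 0 < η)
    (a α β h R : Fin N → ℝ)
    (hα : ∀ n, 0 < α n)
    (hh : ∀ n, 0 < h n) (hR : ∀ n, 0 < R n)
    (ℓs ts Ps : Fin N → ℝ)
    (hℓs : ∀ n, 0 ≤ ℓs n) (hts : ∀ n, 0 < ts n) (hPs : ∀ n, 0 ≤ Ps n)
    (hPsum : ∑ n, Ps n ≤ P0)
    (htime : ∀ n, β n * ℓs n + ts n ≤ T)
    (henergy : ∀ n,
      α n * ℓs n + (ts n / h n) * fRate N0 B (ℓs n / (R n * ts n))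
        ≤ η * Ps n * h n * T0)
    (hopt : ∀ ℓ t P : Fin N → ℝ,
      (∀ n, 0 ≤ ℓ n) → (∀ n, 0 < t n) → (∀ n, 0 ≤ P n) →
      (∑ n, P n ≤ P0) →
      (∀ n, β n * ℓ n + t n ≤ T) →
      (∀ n, α n * ℓ n + (t n / h n) * fRate N0 B (ℓ n / (R n * t n))
          ≤ η * P n * h n * T0) →
      (∑ n, a n * Real.log (1 + ℓ n)) - c * T0 * (∑ n, P n)
        ≤ (∑ n, a n * Real.log (1 + ℓs n)) - c * T0 * (∑ n, Ps n)) :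
    ∀ n, α n * ℓs n + (ts n / h n) * fRate N0 B (ℓs n / (R n * ts n))
        = η * Ps n * h n * T0 := by
  intro n
  set E := α n * ℓs n + (ts n / h n) * fRate N0 B (ℓs n / (R n * ts n))
  by_contra hslack
  have hk : 0 < η * h n * T0 := by have := hh n; positivity
  have hE : 0 ≤ E :=
    energy_nonneg hN0.le hB.le (hα n).le (hh n).le (hR n).le (hℓs n) (hts n).le
  set P := Function.update Ps n (E / (η * h n * T0))
  have hPn_lt : E / (η * h n * T0) < Ps n := by
    rw [div_lt_iff₀ hk]
    linarith [lt_of_le_of_ne (henergy n) hslack]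
  have hsum_lt : ∑ m, P m < ∑ m, Ps m :=
    Fintype.sum_strictMono (update_lt_self_iff.2 hPn_lt)
  have hP_nonneg : ∀ m, 0 ≤ P m :=
    (Function.forall_update_iff Ps fun _ p ↦ 0 ≤ p).2
      ⟨div_nonneg hE hk.le, fun m _ ↦ hPs m⟩
  have hP_energy : ∀ m, α m * ℓs m + (ts m / h m) * fRate N0 B (ℓs m / (R m * ts m))
      ≤ η * P m * h m * T0 :=
    (Function.forall_update_iff Ps fun m p ↦
        α m * ℓs m + (ts m / h m) * fRate N0 B (ℓs m / (R m * ts m)) ≤ η * p * h m * T0).2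
      ⟨((div_mul_cancel₀ E hk.ne').symm.trans (by ring)).le, fun m _ ↦ henergy m⟩
  have hopt_P := hopt ℓs ts P hℓs hts hP_nonneg (hsum_lt.le.trans hPsum) htime hP_energy
  linarith [mul_lt_mul_of_pos_left hsum_lt (mul_pos hc hT0)]

/-- At a maximizer of Problem P1-A, the energy constraint is tight for every sensor. -/
theorem energy_constraint_tight_at_optimum
    (N : ℕ) (hN : 0 < N)
    (N0 B c T0 P0 η T : ℝ)
    (hN0 : 0 < N0) (hB : 0 < B) (hc : 0 < c) (hT0 : 0 < T0)
    (hP0 : 0 < P0) (hη : 0 < η) (hT : 0 < T)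
    (a α β h R : Fin N → ℝ)
    (ha : ∀ n, 0 < a n) (hα : ∀ n, 0 < α n) (hβ : ∀ n, 0 < β n)
    (hh : ∀ n, 0 < h n) (hR : ∀ n, 0 < R n)
    (ℓs ts Ps : Fin N → ℝ)
    (hℓs : ∀ n, 0 ≤ ℓs n) (hts : ∀ n, 0 < ts n) (hPs : ∀ n, 0 ≤ Ps n)
    (hPsum : ∑ n, Ps n ≤ P0)
    (htime : ∀ n, β n * ℓs n + ts n ≤ T)
    (henergy : ∀ n,
      α n * ℓs n + (ts n / h n) * fRate N0 B (ℓs n / (R n * ts n))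
        ≤ η * Ps n * h n * T0)
    (hopt : ∀ ℓ t P : Fin N → ℝ,
      (∀ n, 0 ≤ ℓ n) → (∀ n, 0 < t n) → (∀ n, 0 ≤ P n) →
      (∑ n, P n ≤ P0) →
      (∀ n, β n * ℓ n + t n ≤ T) →
      (∀ n, α n * ℓ n + (t n / h n) * fRate N0 B (ℓ n / (R n * t n))
          ≤ η * P n * h n * T0) →
      (∑ n, a n * Real.log (1 + ℓ n)) - c * T0 * (∑ n, P n)
        ≤ (∑ n, a n * Real.log (1 + ℓs n)) - c * T0 * (∑ n, Ps n)) :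
    ∀ n, α n * ℓs n + (ts n / h n) * fRate N0 B (ℓs n / (R n * ts n))
        = η * Ps n * h n * T0 :=
  energy_constraint_tight_at_optimum_general N N0 B c T0 P0 η T hN0 hB hc hT0 hη a α β h R hα hh hR
    ℓs ts Ps hℓs hts hPs hPsum htime henergy hopt
end

section
/- Consider the WPCS reward-maximization problem P1-A with N sensors: maximize Σ_{n=1}^N a_n·log(1+ℓ_n) − c·T₀·Σ_{n=1}^N P_n over variables ℓ_n ≥ 0, t_n > 0, P_n ≥ 0, subject to Σ_{n=1}^N P_n ≤ P₀, the time constraints β_n·ℓ_n + t_n ≤ T, and the energy constraints α_n·ℓ_n + (t_n/h_n)·f(ℓ_n/(R_n·t_n)) ≤ η·P_n·h_n·T₀. If (ℓ*, t*, P*) is a maximizer of this problem and ℓ_n* > 0 for every n, then for every n the time constraint holds with equality: β_n·ℓ_n* + t_n* = T. -/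
/-! If sensor `n` had slack in its time constraint, it could lengthen its upload time `tₙ` up to
`T - βₙ ℓₙ`. The upload energy `(t / h) f(ℓ / (R t))` is strictly decreasing in `t`, since
`t (2^{k/t} - 1)` is `k log 2` times the slope of the convex function `exp` on `[0, k log 2 / t]`.
So the same data could be delivered with strictly less transmit power `Pₙ`, which strictly raises
the reward `… - c T₀ ∑ P` and contradicts optimality. -/

open Real Finset

lemma exp_sub_one_div_strictMonoOn : StrictMonoOn (fun s => (exp s - 1) / s) (Set.Ioi 0) := by
  intro u (hu : 0 < u) v (hv : 0 < v) huv
  simpa using strictConvexOn_exp.secant_strict_mono (Set.mem_univ 0) (Set.mem_univ u)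
    (Set.mem_univ v) hu.ne' hv.ne' huv

lemma mul_exp_div_sub_one_strictAntiOn {c : ℝ} (hc : 0 < c) :
    StrictAntiOn (fun t => t * (exp (c / t) - 1)) (Set.Ioi 0) := by
  intro t₁ (ht₁ : 0 < t₁) t₂ (ht₂ : 0 < t₂) ht
  have hslope : ∀ t, 0 < t → t * (exp (c / t) - 1) = c * ((exp (c / t) - 1) / (c / t)) := by
    intro t ht
    field_simp
  simp only [hslope t₁ ht₁, hslope t₂ ht₂]
  exact mul_lt_mul_of_pos_left (exp_sub_one_div_strictMonoOn (div_pos hc ht₂) (div_pos hc ht₁)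
    (div_lt_div_of_pos_left hc ht₁ ht)) hc

/-- Energy needed to upload `ℓ` bits in time `t` at rate `R` over a channel of gain `h`. -/
noncomputable def uploadEnergy (N0 B h R ℓ t : ℝ) : ℝ := t / h * fRate N0 B (ℓ / (R * t))

lemma uploadEnergy_nonneg {N0 B h R ℓ t : ℝ} (hN0 : 0 ≤ N0) (hB : 0 ≤ B) (hh : 0 ≤ h)
    (hR : 0 ≤ R) (hℓ : 0 ≤ ℓ) (ht : 0 ≤ t) : 0 ≤ uploadEnergy N0 B h R ℓ t :=
  mul_nonneg (div_nonneg ht hh) (fRate_nonneg hN0 hB (by positivity))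

lemma uploadEnergy_strictAntiOn {N0 B h R ℓ : ℝ} (hN0 : 0 < N0) (hB : 0 < B) (hh : 0 < h)
    (hR : 0 < R) (hℓ : 0 < ℓ) : StrictAntiOn (uploadEnergy N0 B h R ℓ) (Set.Ioi 0) := by
  have hform : ∀ t, 0 < t → uploadEnergy N0 B h R ℓ t =
      N0 / h * (t * (exp (log 2 * (ℓ / (R * B)) / t) - 1)) := by
    intro t ht
    rw [uploadEnergy, fRate, rpow_def_of_pos two_pos]
    field_simp
  intro t₁ ht₁ t₂ ht₂ ht
  rw [hform t₁ ht₁, hform t₂ ht₂]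
  exact mul_lt_mul_of_pos_left
    (mul_exp_div_sub_one_strictAntiOn (by positivity [log_pos one_lt_two]) ht₁ ht₂ ht)
    (by positivity)

lemma exists_lower_power_of_time_slack {N0 B h R ℓ α β η T0 T t P : ℝ} (hN0 : 0 < N0) (hB : 0 < B)
    (hh : 0 < h) (hR : 0 < R) (hℓ : 0 < ℓ) (hα : 0 ≤ α) (hη : 0 < η) (hT0 : 0 < T0) (ht : 0 < t)
    (hslack : β * ℓ + t < T) (henergy : α * ℓ + uploadEnergy N0 B h R ℓ t ≤ η * P * h * T0) :
    ∃ t' P', 0 < t' ∧ 0 ≤ P' ∧ P' < P ∧ β * ℓ + t' ≤ T ∧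
      α * ℓ + uploadEnergy N0 B h R ℓ t' ≤ η * P' * h * T0 := by
  set t' := T - β * ℓ
  have ht' : t < t' := by linarith
  set E' := α * ℓ + uploadEnergy N0 B h R ℓ t'
  have hE' : 0 ≤ E' := add_nonneg (by positivity)
    (uploadEnergy_nonneg hN0.le hB.le hh.le hR.le hℓ.le (ht.trans ht').le)
  have hsaving : E' < η * P * h * T0 := by
    have := uploadEnergy_strictAntiOn hN0 hB hh hR hℓ ht (ht.trans ht') ht'
    linarith
  have hscale : 0 < η * h * T0 := by positivity
  refine ⟨t', E' / (η * h * T0), ht.trans ht', by positivity, ?_, by linarith, ?_⟩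
  · rw [div_lt_iff₀ hscale]
    linarith
  · exact (show η * (E' / (η * h * T0)) * h * T0 = E' by field_simp).ge

theorem time_constraint_tight_at_optimum_general
    (N : ℕ)
    (N0 B c T0 P0 η T : ℝ)
    (hN0 : 0 < N0) (hB : 0 < B) (hc : 0 < c) (hT0 : 0 < T0)
    (hη : 0 < η)
    (a α β h R : Fin N → ℝ)
    (hα : ∀ n, 0 < α n)
    (hh : ∀ n, 0 < h n) (hR : ∀ n, 0 < R n)
    (ℓs ts Ps : Fin N → ℝ)
    (hℓs : ∀ n, 0 < ℓs n) (hts : ∀ n, 0 < ts n) (hPs : ∀ n, 0 ≤ Ps n)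
    (hPsum : ∑ n, Ps n ≤ P0)
    (htime : ∀ n, β n * ℓs n + ts n ≤ T)
    (henergy : ∀ n,
      α n * ℓs n + (ts n / h n) * fRate N0 B (ℓs n / (R n * ts n))
        ≤ η * Ps n * h n * T0)
    (hopt : ∀ ℓ t P : Fin N → ℝ,
      (∀ n, 0 ≤ ℓ n) → (∀ n, 0 < t n) → (∀ n, 0 ≤ P n) →
      (∑ n, P n ≤ P0) →
      (∀ n, β n * ℓ n + t n ≤ T) →
      (∀ n, α n * ℓ n + (t n / h n) * fRate N0 B (ℓ n / (R n * t n))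
          ≤ η * P n * h n * T0) →
      (∑ n, a n * Real.log (1 + ℓ n)) - c * T0 * (∑ n, P n)
        ≤ (∑ n, a n * Real.log (1 + ℓs n)) - c * T0 * (∑ n, Ps n)) :
    ∀ n, β n * ℓs n + ts n = T := by
  intro n₀
  by_contra hne
  obtain ⟨t', P', ht', hP', hP'lt, htime', henergy'⟩ :=
    exists_lower_power_of_time_slack hN0 hB (hh n₀) (hR n₀) (hℓs n₀) (hα n₀).le hη hT0 (hts n₀)
      (lt_of_le_of_ne (htime n₀) hne) (henergy n₀)
  set ts' := Function.update ts n₀ t'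
  set Ps' := Function.update Ps n₀ P'
  have hsum : ∑ n, Ps' n < ∑ n, Ps n :=
    sum_lt_sum (fun n _ => update_le_self_iff.2 hP'lt.le n)
      ⟨n₀, mem_univ _, by simpa [Ps'] using hP'lt⟩
  have hgain := hopt ℓs ts' Ps' (fun n => (hℓs n).le)
    ((Function.forall_update_iff ts fun _ x => 0 < x).2 ⟨ht', fun n _ => hts n⟩)
    ((Function.forall_update_iff Ps fun _ x => 0 ≤ x).2 ⟨hP', fun n _ => hPs n⟩)
    (hsum.le.trans hPsum)
    ((Function.forall_update_iff ts fun n x => β n * ℓs n + x ≤ T).2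
      ⟨htime', fun n _ => htime n⟩)
    (by
      intro n
      rcases eq_or_ne n n₀ with rfl | hn
      · simpa [ts', Ps', uploadEnergy] using henergy'
      · simpa [ts', Ps', hn] using henergy n)
  linarith [mul_lt_mul_of_pos_left hsum (mul_pos hc hT0)]

/-- At a maximizer of Problem P1-A with strictly positive sensing-data sizes,
the time constraint is tight for every sensor. -/
theorem time_constraint_tight_at_optimum
    (N : ℕ) (hN : 0 < N)
    (N0 B c T0 P0 η T : ℝ)
    (hN0 : 0 < N0) (hB : 0 < B) (hc : 0 < c) (hT0 : 0 < T0)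
    (hP0 : 0 < P0) (hη : 0 < η) (hT : 0 < T)
    (a α β h R : Fin N → ℝ)
    (ha : ∀ n, 0 < a n) (hα : ∀ n, 0 < α n) (hβ : ∀ n, 0 < β n)
    (hh : ∀ n, 0 < h n) (hR : ∀ n, 0 < R n)
    (ℓs ts Ps : Fin N → ℝ)
    (hℓs : ∀ n, 0 < ℓs n) (hts : ∀ n, 0 < ts n) (hPs : ∀ n, 0 ≤ Ps n)
    (hPsum : ∑ n, Ps n ≤ P0)
    (htime : ∀ n, β n * ℓs n + ts n ≤ T)
    (henergy : ∀ n,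
      α n * ℓs n + (ts n / h n) * fRate N0 B (ℓs n / (R n * ts n))
        ≤ η * Ps n * h n * T0)
    (hopt : ∀ ℓ t P : Fin N → ℝ,
      (∀ n, 0 ≤ ℓ n) → (∀ n, 0 < t n) → (∀ n, 0 ≤ P n) →
      (∑ n, P n ≤ P0) →
      (∀ n, β n * ℓ n + t n ≤ T) →
      (∀ n, α n * ℓ n + (t n / h n) * fRate N0 B (ℓ n / (R n * t n))
          ≤ η * P n * h n * T0) →
      (∑ n, a n * Real.log (1 + ℓ n)) - c * T0 * (∑ n, P n)
        ≤ (∑ n, a n * Real.log (1 + ℓs n)) - c * T0 * (∑ n, Ps n)) :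
    ∀ n, β n * ℓs n + ts n = T :=
  time_constraint_tight_at_optimum_general N N0 B c T0 P0 η T hN0 hB hc hT0 hη a α β h R hα hh hR ℓs
    ts Ps hℓs hts hPs hPsum htime henergy hopt
end

section
/- The per-sensor energy-consumption function E(t) = α·(T−t)/(η·β·h) + (t/(η·h²))·f((T−t)/(R·β·t)) is strictly convex on the open interval (0, T). -/
/-!
Since `2 ^ x = exp (x log 2)`, the energy is an affine function of `t` plus a positive multiple of
`t exp (k / t)` with `k = T log 2 / (R β B) > 0`. The latter, a perspective of `exp`, is strictly
convex on `t > 0` because its second derivative is `exp (k / t) k² / t³`.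
-/

open Real Set

theorem StrictConvexOn.const_mul {E : Type*} [AddCommMonoid E] [Module ℝ E] {s : Set E}
    {f : E → ℝ} {c : ℝ} (hf : StrictConvexOn ℝ s f) (hc : 0 < c) :
    StrictConvexOn ℝ s fun x => c * f x := by
  refine ⟨hf.1, fun x hx y hy hxy a b ha hb hab => ?_⟩
  calc c * f (a • x + b • y) < c * (a • f x + b • f y) :=
        mul_lt_mul_of_pos_left (hf.2 hx hy hxy ha hb hab) hc
    _ = a • (c * f x) + b • (c * f y) := by simp only [smul_eq_mul]; ring

theorem hasDerivAt_const_div (k : ℝ) {t : ℝ} (ht : t ≠ 0) :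
    HasDerivAt (fun t => k / t) (-(k / t ^ 2)) t := by
  simpa [div_eq_mul_inv, mul_comm] using (hasDerivAt_inv ht).const_mul k

theorem hasDerivAt_mul_exp_div (k : ℝ) {t : ℝ} (ht : t ≠ 0) :
    HasDerivAt (fun t => t * exp (k / t)) (exp (k / t) * (1 - k / t)) t := by
  refine ((hasDerivAt_id' t).mul (hasDerivAt_const_div k ht).exp).congr_deriv ?_
  field_simp
  ring

theorem hasDerivAt_exp_div_mul_one_sub_div (k : ℝ) {t : ℝ} (ht : t ≠ 0) :
    HasDerivAt (fun t => exp (k / t) * (1 - k / t)) (exp (k / t) * (k ^ 2 / t ^ 3)) t := by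
  have hdiv := hasDerivAt_const_div k ht
  refine (hdiv.exp.mul (hdiv.const_sub 1)).congr_deriv ?_
  field_simp
  ring

theorem strictConvexOn_mul_exp_div {k : ℝ} (hk : k ≠ 0) :
    StrictConvexOn ℝ (Ioi 0) fun t => t * exp (k / t) := by
  refine strictConvexOn_of_deriv2_pos (convex_Ioi 0) ?_ fun t ht => ?_
  · exact fun t ht => (hasDerivAt_mul_exp_div k (ne_of_gt ht)).continuousAt.continuousWithinAt
  rw [interior_Ioi] at ht
  have hderiv : deriv (fun t => t * exp (k / t)) =ᶠ[nhds t] fun t => exp (k / t) * (1 - k / t) :=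
    Filter.eventually_of_mem (Ioi_mem_nhds ht) fun s hs =>
      (hasDerivAt_mul_exp_div k (ne_of_gt hs)).deriv
  rw [Function.iterate_succ_apply, Function.iterate_one, hderiv.deriv_eq,
    (hasDerivAt_exp_div_mul_one_sub_div k (ne_of_gt ht)).deriv]
  have ht3 : 0 < t ^ 3 := pow_pos ht 3
  positivity

theorem energy_strictly_convex_general
    (N0 B α β h R η T : ℝ)
    (hN0 : 0 < N0) (hB : 0 < B) (hβ : 0 < β)
    (hh : 0 < h) (hR : 0 < R) (hη : 0 < η) (hT : 0 < T) :
    StrictConvexOn ℝ (Ioo 0 T)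
      (fun t : ℝ =>
        α * (T - t) / (η * β * h)
          + (t / (η * h ^ 2)) * (N0 * ((2 : ℝ) ^ ((T - t) / (R * β * t) / B) - 1))) := by
  set k := log 2 * T / (R * β * B)
  set c := N0 / (η * h ^ 2) * exp (-(log 2 / (R * β * B)))
  have hk : k ≠ 0 := by have := log_pos one_lt_two; positivity
  have hc : 0 < c := by positivity
  have hlinear : ConvexOn ℝ (Ioo 0 T) fun t => (-α / (η * β * h) - N0 / (η * h ^ 2)) * t :=
    (LinearMap.mul ℝ ℝ _).convexOn (convex_Ioo 0 T)
  have hperspective : StrictConvexOn ℝ (Ioo 0 T) fun t => c * (t * exp (k / t)) :=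
    ((strictConvexOn_mul_exp_div hk).const_mul hc).subset Ioo_subset_Ioi_self (convex_Ioo 0 T)
  refine ((hlinear.add_strictConvexOn hperspective).add_const (α * T / (η * β * h))).congr
    fun t ht => ?_
  have hpow : (2 : ℝ) ^ ((T - t) / (R * β * t) / B)
      = exp (-(log 2 / (R * β * B))) * exp (k / t) := by
    rw [rpow_def_of_pos two_pos, ← exp_add]
    congr 1
    simp only [k]
    field_simp [ht.1.ne']
    ring
  simp only [Pi.add_apply, hpow, c]
  field_simp
  ring

/-- The per-sensor energy-consumption function
`E(t) = α (T−t)/(η β h) + (t/(η h²)) f((T−t)/(R β t))`, with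
`f(x) = N₀ (2^{x/B} − 1)`, is strictly convex on `(0, T)`. -/
theorem energy_strictly_convex
    (N0 B α β h R η T : ℝ)
    (hN0 : 0 < N0) (hB : 0 < B) (hα : 0 < α) (hβ : 0 < β)
    (hh : 0 < h) (hR : 0 < R) (hη : 0 < η) (hT : 0 < T) :
    StrictConvexOn ℝ (Ioo 0 T)
      (fun t : ℝ =>
        α * (T - t) / (η * β * h)
          + (t / (η * h ^ 2)) * (N0 * ((2 : ℝ) ^ ((T - t) / (R * β * t) / B) - 1))) :=
  energy_strictly_convex_general N0 B α β h R η T hN0 hB hβ hh hR hη hT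
end

section
/- For fixed data size ℓ > 0, the objective of Problem P1-B, namely the function (R, t) ↦ (q_r + q_s + q_c·C(R,ε))·ℓ + (t/h)·f(ℓ/(t·R)), is convex on the set {(R, t) : R ≥ 1, t > 0}. -/
/-!
The compression term is a nonnegative multiple of the convex function `R ↦ e^{εR}` plus a
constant. Since `ℓ / (t R) = (ℓ / R) / t`, the transmission term is `h⁻¹ · t f((ℓ / R) / t)`: the
perspective `(y, t) ↦ t f(y / t)` of the convex function `f`, evaluated at the convex function
`ℓ / R`. The perspective of a convex function is jointly convex, and it is nondecreasing in `y`
because `f` is, so the composition is convex as well.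
-/

open Real Set

theorem ConvexOn.perspective {s : Set ℝ} {φ : ℝ → ℝ} (hφ : ConvexOn ℝ s φ) :
    ConvexOn ℝ {p : ℝ × ℝ | 0 < p.2 ∧ p.1 / p.2 ∈ s} fun p => p.2 * φ (p.1 / p.2) := by
  have key : ∀ ⦃p : ℝ × ℝ⦄, 0 < p.2 ∧ p.1 / p.2 ∈ s → ∀ ⦃q : ℝ × ℝ⦄, 0 < q.2 ∧ q.1 / q.2 ∈ s →
      ∀ ⦃a b : ℝ⦄, 0 ≤ a → 0 ≤ b → a + b = 1 →
        (0 < (a • p + b • q).2 ∧ (a • p + b • q).1 / (a • p + b • q).2 ∈ s) ∧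
        (a • p + b • q).2 * φ ((a • p + b • q).1 / (a • p + b • q).2)
          ≤ a • (p.2 * φ (p.1 / p.2)) + b • (q.2 * φ (q.1 / q.2)) := by
    rintro ⟨x₁, t₁⟩ ⟨ht₁, hs₁⟩ ⟨x₂, t₂⟩ ⟨ht₂, hs₂⟩ a b ha hb hab
    simp only [Prod.smul_mk, Prod.mk_add_mk, smul_eq_mul] at *
    have hT : 0 < a * t₁ + b * t₂ := convex_Ioi (0 : ℝ) ht₁ ht₂ ha hb hab
    -- with weights `a tᵢ / (a t₁ + b t₂)`, the slope of the mean point is the mean of the slopes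
    set w₁ := a * t₁ / (a * t₁ + b * t₂) with hw₁_def
    set w₂ := b * t₂ / (a * t₁ + b * t₂) with hw₂_def
    have hw : w₁ + w₂ = 1 := by rw [hw₁_def, hw₂_def]; field_simp
    have hmix : (a * x₁ + b * x₂) / (a * t₁ + b * t₂) = w₁ * (x₁ / t₁) + w₂ * (x₂ / t₂) := by
      rw [hw₁_def, hw₂_def]; field_simp
    have hw₁ : 0 ≤ w₁ := by positivity
    have hw₂ : 0 ≤ w₂ := by positivity
    refine ⟨⟨hT, hmix ▸ hφ.1 hs₁ hs₂ hw₁ hw₂ hw⟩, ?_⟩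
    calc (a * t₁ + b * t₂) * φ ((a * x₁ + b * x₂) / (a * t₁ + b * t₂))
        ≤ (a * t₁ + b * t₂) * (w₁ * φ (x₁ / t₁) + w₂ * φ (x₂ / t₂)) := by
          rw [hmix]; exact mul_le_mul_of_nonneg_left (hφ.2 hs₁ hs₂ hw₁ hw₂ hw) hT.le
      _ = a * (t₁ * φ (x₁ / t₁)) + b * (t₂ * φ (x₂ / t₂)) := by
          rw [hw₁_def, hw₂_def]; field_simp
  exact ⟨fun p hp q hq a b ha hb hab => (key hp hq ha hb hab).1,
    fun p hp q hq a b ha hb hab => (key hp hq ha hb hab).2⟩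

theorem ConvexOn.perspective_comp {E : Type*} [AddCommGroup E] [Module ℝ E] {s : Set E}
    {g : E → ℝ} {φ : ℝ → ℝ} (hφ : ConvexOn ℝ univ φ) (hφm : Monotone φ) (hg : ConvexOn ℝ s g) :
    ConvexOn ℝ (s ×ˢ Ioi 0) fun p => p.2 * φ (g p.1 / p.2) := by
  have hS : Convex ℝ (s ×ˢ Ioi (0 : ℝ)) := hg.1.prod (convex_Ioi 0)
  refine ⟨hS, fun p hp q hq a b ha hb hab => ?_⟩
  have hT : 0 < (a • p + b • q).2 := (hS hp hq ha hb hab).2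
  calc (a • p + b • q).2 * φ (g (a • p + b • q).1 / (a • p + b • q).2)
      ≤ (a • p + b • q).2 * φ ((a • g p.1 + b • g q.1) / (a • p + b • q).2) := by
        gcongr
        exact hφm (div_le_div_of_nonneg_right (hg.2 hp.1 hq.1 ha hb hab) hT.le)
    _ ≤ a • (p.2 * φ (g p.1 / p.2)) + b • (q.2 * φ (g q.1 / q.2)) :=
        hφ.perspective.2 (x := (g p.1, p.2)) (y := (g q.1, q.2)) ⟨hp.2, trivial⟩ ⟨hq.2, trivial⟩
          ha hb hab

noncomputable def compressionComplexity (ε R : ℝ) : ℝ := exp (ε * R) - exp ε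

noncomputable def transmitPower (N0 B x : ℝ) : ℝ := N0 * (2 ^ (x / B) - 1)

theorem convexOn_compressionComplexity (ε : ℝ) : ConvexOn ℝ univ (compressionComplexity ε) :=
  (convexOn_exp.comp_linearMap (ε • LinearMap.id)).add_const (-exp ε) |>.congr
    fun R _ => by simp [compressionComplexity, sub_eq_add_neg]

theorem convexOn_transmitPower {N0 : ℝ} (hN0 : 0 ≤ N0) (B : ℝ) :
    ConvexOn ℝ univ (transmitPower N0 B) :=
  (((convexOn_rpow_left two_pos).comp_linearMap (B⁻¹ • LinearMap.id)).add_const (-1)).smul hN0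
    |>.congr fun x _ => by simp [transmitPower, div_eq_inv_mul, sub_eq_add_neg]

theorem monotone_transmitPower {N0 B : ℝ} (hN0 : 0 ≤ N0) (hB : 0 ≤ B) :
    Monotone (transmitPower N0 B) := fun x y hxy => by
  unfold transmitPower
  gcongr
  norm_num

theorem convexOn_div_Ioi {c : ℝ} (hc : 0 ≤ c) : ConvexOn ℝ (Ioi 0) fun x : ℝ => c / x :=
  ((convexOn_zpow (-1)).smul hc).congr fun x _ => by simp only [smul_eq_mul, zpow_neg_one, div_eq_mul_inv]

theorem P1B_objective_convex_general
    (N0 B qr qs qc h ε ℓ : ℝ)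
    (hN0 : 0 < N0) (hB : 0 < B) (hqc : 0 < qc)
    (hh : 0 < h) (hℓ : 0 < ℓ) :
    ConvexOn ℝ {p : ℝ × ℝ | 1 ≤ p.1 ∧ 0 < p.2}
      (fun p : ℝ × ℝ =>
        (qr + qs + qc * (Real.exp (ε * p.1) - Real.exp ε)) * ℓ
          + (p.2 / h) * (N0 * ((2 : ℝ) ^ (ℓ / (p.2 * p.1) / B) - 1))) := by
  show ConvexOn ℝ (Ici 1 ×ˢ Ioi 0) fun p : ℝ × ℝ =>
    (qr + qs + qc * compressionComplexity ε p.1) * ℓ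
      + p.2 / h * transmitPower N0 B (ℓ / (p.2 * p.1))
  have hS : Convex ℝ (Ici (1 : ℝ) ×ˢ Ioi (0 : ℝ)) := (convex_Ici 1).prod (convex_Ioi 0)
  have compression : ConvexOn ℝ (Ici 1 ×ˢ Ioi 0) fun p : ℝ × ℝ =>
      (qr + qs + qc * compressionComplexity ε p.1) * ℓ := by
    refine ((((convexOn_compressionComplexity ε).smul (mul_pos hqc hℓ).le).add_const
      ((qr + qs) * ℓ)).comp_linearMap (LinearMap.fst ℝ ℝ ℝ)).subset (subset_univ _) hS |>.congr
      fun p _ => ?_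
    simp only [Function.comp_apply, LinearMap.fst_apply, Pi.add_apply, smul_eq_mul]
    ring
  have transmission : ConvexOn ℝ (Ici 1 ×ˢ Ioi 0) fun p : ℝ × ℝ =>
      p.2 / h * transmitPower N0 B (ℓ / (p.2 * p.1)) := by
    have perspective := (convexOn_transmitPower hN0.le B).perspective_comp
      (monotone_transmitPower hN0.le hB.le) (convexOn_div_Ioi hℓ.le)
    refine (perspective.smul (inv_nonneg.2 hh.le)).subset
      (prod_mono (Ici_subset_Ioi.2 one_pos) le_rfl) hS |>.congr fun p _ => ?_
    simp only [smul_eq_mul, div_div, mul_comm p.1]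
    ring
  exact compression.add transmission

/-- For fixed data size `ℓ > 0`, the objective of Problem P1-B,
`(R, t) ↦ (q_r + q_s + q_c C(R,ε)) ℓ + (t/h) f(ℓ/(t R))`, with
`f(x) = N₀ (2^{x/B} − 1)` and `C(R,ε) = e^{εR} − e^{ε}`,
is convex on `{(R, t) : R ≥ 1, t > 0}`. -/
theorem P1B_objective_convex
    (N0 B qr qs qc h ε ℓ : ℝ)
    (hN0 : 0 < N0) (hB : 0 < B) (hqr : 0 < qr) (hqs : 0 < qs) (hqc : 0 < qc)
    (hh : 0 < h) (hε : 0 < ε) (hℓ : 0 < ℓ) :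
    ConvexOn ℝ {p : ℝ × ℝ | 1 ≤ p.1 ∧ 0 < p.2}
      (fun p : ℝ × ℝ =>
        (qr + qs + qc * (Real.exp (ε * p.1) - Real.exp ε)) * ℓ
          + (p.2 / h) * (N0 * ((2 : ℝ) ^ (ℓ / (p.2 * p.1) / B) - 1))) :=
  P1B_objective_convex_general N0 B qr qs qc h ε ℓ hN0 hB hqc hh hℓ
end

section
/- Define on (0, T] the function A(t) = ((λ+c)·N₀·(β + (T−t))/(η·h²)) · [ (T·ln 2/(B·R·β·t) − 1)·2^{(T−t)/(B·R·β·t)} + α·h/(N₀·β) + 1 ]. Then A is strictly decreasing on (0, T]. Consequently, if t₁, t₂ ∈ (0, T] satisfy A(t₁) = a₁ and A(t₂) = a₂ with a₁ ≥ a₂, then t₁ ≤ t₂. -/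
open Real Set

/-! With `k = B R β` and `u = (T - t) / (k t)`, the bracket in `A` is `(log 2 * u + p) * 2 ^ u + E`
with `p + 1 = log 2 / k > 0`. This increases in `u ≥ 0` (its derivative is
`log 2 * 2 ^ u * (log 2 * u + p + 1)`), while `u` decreases in `t`; the prefactor `β + (T - t)`
decreases too, and both factors are positive on `(0, T]`, so their product is strictly decreasing. -/

theorem StrictAntiOn.mul_of_nonneg {α : Type*} [Preorder α] {f g : α → ℝ} {s : Set α}
    (hf : StrictAntiOn f s) (hg : StrictAntiOn g s) (hf₀ : ∀ x ∈ s, 0 ≤ f x)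
    (hg₀ : ∀ x ∈ s, 0 ≤ g x) : StrictAntiOn (fun x => f x * g x) s :=
  fun _ hx _ hy hxy => mul_lt_mul'' (hf hx hy hxy) (hg hx hy hxy) (hf₀ _ hy) (hg₀ _ hy)

theorem strictMonoOn_log_mul_add_mul_rpow {b p : ℝ} (hb : 1 < b) (hp : 0 ≤ p + 1) :
    StrictMonoOn (fun u : ℝ => (log b * u + p) * b ^ u) (Ici 0) := by
  have hb₀ : 0 < b := by linarith
  have hlog : 0 < log b := log_pos hb
  have hcont : Continuous fun u : ℝ => (log b * u + p) * b ^ u := by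
    have := continuous_const.rpow continuous_id fun _ => Or.inl hb₀.ne'
    fun_prop
  refine strictMonoOn_of_deriv_pos (convex_Ici 0) hcont.continuousOn fun u hu => ?_
  rw [interior_Ici, mem_Ioi] at hu
  have hderiv : HasDerivAt (fun u : ℝ => (log b * u + p) * b ^ u)
      (log b * b ^ u * (log b * u + p + 1)) u := by
    have hlin : HasDerivAt (fun u : ℝ => log b * u + p) (log b) u := by
      simpa using ((hasDerivAt_id u).const_mul (log b)).add_const p
    exact (hlin.fun_mul (hasStrictDerivAt_const_rpow hb₀ u).hasDerivAt).congr_deriv (by ring)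
  rw [hderiv.deriv]
  have : 0 < log b * u + p + 1 := by nlinarith
  positivity

theorem strictAntiOn_sub_div_mul_self {k T : ℝ} (hk : 0 < k) :
    StrictAntiOn (fun t : ℝ => (T - t) / (k * t)) (Ioc 0 T) := by
  intro x hx y hy hxy
  have hx₀ := hx.1
  have hy₀ := hy.1
  rw [div_lt_div_iff₀ (by positivity) (by positivity)]
  have hT : 0 < T := hy₀.trans_le hy.2
  nlinarith [mul_pos (mul_pos hk hT) (sub_pos.2 hxy)]

theorem mul_log_div_sub_one_eq {b k t T : ℝ} (hk : k ≠ 0) (ht : t ≠ 0) :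
    T * log b / (k * t) - 1 = log b * ((T - t) / (k * t)) + (log b / k - 1) := by
  field_simp
  ring

theorem utility_weight_monotone_transmission_general
    (lam c N0 B R β α h η T : ℝ)
    (hlam : 0 ≤ lam) (hc : 0 < c) (hN0 : 0 < N0) (hB : 0 < B) (hR : 0 < R)
    (hβ : 0 < β) (hα : 0 < α) (hh : 0 < h) (hη : 0 < η)
    (A : ℝ → ℝ)
    (hA : ∀ t, A t =
      (lam + c) * N0 * (β + (T - t)) / (η * h ^ 2) *
        ((T * Real.log 2 / (B * R * β * t) - 1) *
            (2 : ℝ) ^ ((T - t) / (B * R * β * t))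
          + α * h / (N0 * β) + 1)) :
    StrictAntiOn A (Ioc 0 T) ∧
      ∀ t₁ t₂ : ℝ, t₁ ∈ Ioc 0 T → t₂ ∈ Ioc 0 T →
        ∀ a₁ a₂ : ℝ, A t₁ = a₁ → A t₂ = a₂ → a₁ ≥ a₂ → t₁ ≤ t₂ := by
  set k := B * R * β
  set K := (lam + c) * N0 / (η * h ^ 2)
  set p := log 2 / k - 1
  set E := α * h / (N0 * β) + 1
  set g := fun u : ℝ => (log 2 * u + p) * (2 : ℝ) ^ u + E
  set u := fun t : ℝ => (T - t) / (k * t)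
  have hk : 0 < k := by positivity
  have hK : 0 < K := by positivity [add_pos_of_nonneg_of_pos hlam hc]
  have hg : StrictMonoOn g (Ici 0) := fun x hx y hy hxy =>
    add_lt_add_left (strictMonoOn_log_mul_add_mul_rpow (p := p) one_lt_two
      (by simp only [p, sub_add_cancel]; positivity) hx hy hxy) E
  have hu : MapsTo u (Ioc 0 T) (Ici 0) := fun t ht =>
    div_nonneg (sub_nonneg.2 ht.2) (mul_pos hk ht.1).le
  have hgu₀ : ∀ t ∈ Ioc 0 T, 0 ≤ g (u t) := fun t ht => by
    have : g 0 ≤ g (u t) := hg.monotoneOn self_mem_Ici (hu ht) (hu ht)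
    have hg0 : g 0 = log 2 / k + α * h / (N0 * β) := by
      simp only [g, p, E, mul_zero, zero_add, rpow_zero, mul_one]
      ring
    linarith [show 0 < g 0 from hg0 ▸ by positivity]
  have hprod : StrictAntiOn (fun t => K * (β + (T - t)) * g (u t)) (Ioc 0 T) :=
    StrictAntiOn.mul_of_nonneg (fun x _ y _ hxy => by gcongr)
      (hg.comp_strictAntiOn (strictAntiOn_sub_div_mul_self hk) hu)
      (fun t ht => mul_nonneg hK.le (by linarith [ht.2])) hgu₀
  have hanti : StrictAntiOn A (Ioc 0 T) := hprod.congr fun t ht => by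
    simp only [g, u, p, E, K, hA, mul_log_div_sub_one_eq hk.ne' ht.1.ne']
    ring
  exact ⟨hanti, fun t₁ t₂ h₁ h₂ a₁ a₂ e₁ e₂ hge =>
    (hanti.le_iff_ge h₂ h₁).1 (e₁ ▸ e₂ ▸ hge)⟩

/-- The function `A(t)` arising from the stationarity equation for the optimal
sensor-transmission duration is strictly decreasing on `(0, T]`; consequently,
solutions with larger utility weights have smaller transmission durations. -/
theorem utility_weight_monotone_transmission
    (lam c N0 B R β α h η T : ℝ)
    (hlam : 0 ≤ lam) (hc : 0 < c) (hN0 : 0 < N0) (hB : 0 < B) (hR : 0 < R)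
    (hβ : 0 < β) (hα : 0 < α) (hh : 0 < h) (hη : 0 < η) (hT : 0 < T)
    (A : ℝ → ℝ)
    (hA : ∀ t, A t =
      (lam + c) * N0 * (β + (T - t)) / (η * h ^ 2) *
        ((T * Real.log 2 / (B * R * β * t) - 1) *
            (2 : ℝ) ^ ((T - t) / (B * R * β * t))
          + α * h / (N0 * β) + 1)) :
    StrictAntiOn A (Ioc 0 T) ∧
      ∀ t₁ t₂ : ℝ, t₁ ∈ Ioc 0 T → t₂ ∈ Ioc 0 T →
        ∀ a₁ a₂ : ℝ, A t₁ = a₁ → A t₂ = a₂ → a₁ ≥ a₂ → t₁ ≤ t₂ :=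
  utility_weight_monotone_transmission_general lam c N0 B R β α h η T hlam hc hN0 hB hR hβ hα hh hη
    A hA
end

section
/- For channel gain h > 0 define on (0, T] the stationarity function F(t; h) = a/(β + (T−t)) + ((λ+c)/(η·h))·[(N₀/h)·((1 − T·ln 2/(B·R·β·t))·2^{(T−t)/(B·R·β·t)} − 1) − α/β]. If t₁, t₂ ∈ (0, T] satisfy F(t₁; h₁) = 0 and F(t₂; h₂) = 0 for channel gains h₁ ≥ h₂ > 0 (all other parameters identical), then t₁ ≤ t₂. -/
/-!
With `k = B R β` and `u = T log 2 / (k t)`, the bracket multiplying `N₀ / h` in `F` equals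
`2^(-1/k) (1 - u) eᵘ - 1`. Since `(1 - u) eᵘ` decreases for `u ≥ 0` and `u` decreases in `t`,
the bracket increases in `t`, and it is negative on `(0, T]` because its value at `t = T` is
`-log 2 / k`. So the channel term of `F` increases with both `t` and `h`, while `a / (β + T - t)`
increases with `t`; two roots with `h₁ ≥ h₂` and `t₁ > t₂` would contradict each other.
-/

open Real Set

theorem strictAntiOn_one_sub_mul_exp : StrictAntiOn (fun u : ℝ => (1 - u) * exp u) (Ici 0) := by
  refine strictAntiOn_of_deriv_neg (convex_Ici 0) (by fun_prop) fun u hu => ?_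
  rw [interior_Ici, mem_Ioi] at hu
  have hderiv : HasDerivAt (fun u : ℝ => (1 - u) * exp u) (-u * exp u) u :=
    (((hasDerivAt_id' u).const_sub 1).mul (hasDerivAt_exp u)).congr_deriv (by ring)
  rw [hderiv.deriv]
  exact mul_neg_of_neg_of_pos (neg_neg_of_pos hu) (exp_pos u)

/-- The derivative in `t` of `t (2^((T - t) / (k t)) - 1)`, the energy factor of the
transmission term of `F`; in the theorem `k = B R β`. -/
noncomputable def energyDeriv (T k t : ℝ) : ℝ :=
  (1 - T * log 2 / (k * t)) * (2 : ℝ) ^ ((T - t) / (k * t)) - 1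

theorem energyDeriv_eq {T k t : ℝ} (hk : k ≠ 0) (ht : t ≠ 0) :
    energyDeriv T k t =
      exp (-(log 2 / k)) * ((1 - T * log 2 / (k * t)) * exp (T * log 2 / (k * t))) - 1 := by
  have hpow : (2 : ℝ) ^ ((T - t) / (k * t)) = exp (-(log 2 / k)) * exp (T * log 2 / (k * t)) := by
    rw [rpow_def_of_pos two_pos, ← exp_add]
    congr 1
    field_simp
    ring
  rw [energyDeriv, hpow]
  ring

theorem energyDeriv_self {T : ℝ} (k : ℝ) (hT : T ≠ 0) : energyDeriv T k T = -(log 2 / k) := by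
  rw [energyDeriv, sub_self, zero_div, rpow_zero, mul_comm k, mul_div_mul_left _ _ hT]
  ring

theorem energyDeriv_strictMonoOn {T k : ℝ} (hT : 0 < T) (hk : 0 < k) :
    StrictMonoOn (energyDeriv T k) (Ioi 0) := by
  intro s (hs : 0 < s) t (ht : 0 < t) hst
  have hu : T * log 2 / (k * t) < T * log 2 / (k * s) := by gcongr
  have hdecr := strictAntiOn_one_sub_mul_exp (by positivity : (0 : ℝ) ≤ T * log 2 / (k * t))
    (by positivity : (0 : ℝ) ≤ T * log 2 / (k * s)) hu
  rw [energyDeriv_eq hk.ne' hs.ne', energyDeriv_eq hk.ne' ht.ne']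
  simpa using mul_lt_mul_of_pos_left hdecr (exp_pos (-(log 2 / k)))

theorem energyDeriv_neg {T k t : ℝ} (hT : 0 < T) (hk : 0 < k) (ht : t ∈ Ioc 0 T) :
    energyDeriv T k t < 0 := by
  have hle : energyDeriv T k t ≤ energyDeriv T k T :=
    (energyDeriv_strictMonoOn hT hk).monotoneOn ht.1 hT ht.2
  rw [energyDeriv_self k hT.ne'] at hle
  have : 0 < log 2 / k := by positivity
  linarith

theorem channel_term_lt {K η N₀ A h₁ h₂ x₁ x₂ : ℝ} (hK : 0 < K) (hη : 0 < η) (hN₀ : 0 < N₀)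
    (hA : 0 ≤ A) (hh₂ : 0 < h₂) (hh : h₂ ≤ h₁) (hx : x₂ < x₁) (hx₁ : x₁ ≤ 0) :
    K / (η * h₂) * (N₀ / h₂ * x₂ - A) < K / (η * h₁) * (N₀ / h₁ * x₁ - A) := by
  have hh₁ : 0 < h₁ := hh₂.trans_le hh
  suffices K / (η * h₁) * (A + N₀ / h₁ * -x₁) < K / (η * h₂) * (A + N₀ / h₂ * -x₂) by
    linarith
  calc K / (η * h₁) * (A + N₀ / h₁ * -x₁)
      ≤ K / (η * h₂) * (A + N₀ / h₂ * -x₁) := by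
        have : 0 ≤ -x₁ := by linarith
        gcongr
    _ < K / (η * h₂) * (A + N₀ / h₂ * -x₂) := by gcongr

/-- If two sensors differ only in their channel gains `h₁ ≥ h₂ > 0` and their
transmission durations satisfy the first-order optimality condition
`F(t; h) = 0` of Problem P2, then `t₁ ≤ t₂`. -/
theorem channel_gain_monotone_transmission
    (lam a c N0 B R β α η T : ℝ)
    (hlam : 0 ≤ lam) (ha : 0 < a) (hc : 0 < c) (hN0 : 0 < N0) (hB : 0 < B)
    (hR : 0 < R) (hβ : 0 < β) (hα : 0 < α) (hη : 0 < η) (hT : 0 < T)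
    (F : ℝ → ℝ → ℝ)
    (hF : ∀ t h, F t h =
      a / (β + (T - t))
        + ((lam + c) / (η * h)) *
          ((N0 / h) *
              ((1 - T * Real.log 2 / (B * R * β * t)) *
                  (2 : ℝ) ^ ((T - t) / (B * R * β * t)) - 1)
            - α / β))
    (h₁ h₂ t₁ t₂ : ℝ)
    (hh₂ : 0 < h₂) (hh : h₁ ≥ h₂)
    (ht₁ : t₁ ∈ Ioc 0 T) (ht₂ : t₂ ∈ Ioc 0 T)
    (hF₁ : F t₁ h₁ = 0) (hF₂ : F t₂ h₂ = 0) :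
    t₁ ≤ t₂ := by
  by_contra! hlt
  have hk : 0 < B * R * β := by positivity
  have henergy : energyDeriv T (B * R * β) t₂ < energyDeriv T (B * R * β) t₁ :=
    energyDeriv_strictMonoOn hT hk ht₂.1 ht₁.1 hlt
  have hchannel := channel_term_lt (by positivity : 0 < lam + c) hη hN0
    (by positivity : 0 ≤ α / β) hh₂ hh henergy (energyDeriv_neg hT hk ht₁).le
  have hload : a / (β + (T - t₂)) < a / (β + (T - t₁)) :=
    div_lt_div_of_pos_left ha (by linarith [ht₁.2]) (by linarith)
  rw [hF] at hF₁ hF₂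
  simp only [energyDeriv] at hchannel
  linarith
end

section
/- Define on (0, T] the wireless-power function P(t) = (1/(h·η·T₀))·[(t/h)·f((T−t)/(R·β·t)) + α·(T−t)/β]. Then P is strictly decreasing on (0, T], P(T) = 0, and P(t) > 0 for every t ∈ (0, T). -/
open Real Set

/-! With `x = a / t`, the derivative of `t ↦ t (exp (a/t - c) - 1)` is
`exp (-c) · exp x (1 - x) - 1 ≤ 0`, because `exp x (1 - x) ≤ 1` and `c ≥ 0`. Writing
`2 ^ ((T - t)/(R β t)/B)` in this form, the first summand of `P` is antitone on `(0, ∞)`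
while the second, `α (T - t)/β`, is strictly decreasing; so `P` is strictly decreasing,
and `P t > P T = 0` for `t < T`. -/

lemma exp_mul_one_sub_le_one (x : ℝ) : exp x * (1 - x) ≤ 1 :=
  calc exp x * (1 - x) ≤ exp x * exp (-x) :=
        mul_le_mul_of_nonneg_left (one_sub_le_exp_neg x) (exp_pos x).le
    _ = 1 := by rw [← exp_add, add_neg_cancel, exp_zero]

lemma hasDerivAt_mul_exp_div_sub_sub_one (a c : ℝ) {t : ℝ} (ht : t ≠ 0) :
    HasDerivAt (fun s => s * (exp (a / s - c) - 1)) (exp (a / t - c) * (1 - a / t) - 1) t := by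
  have hexp : HasDerivAt (fun s => exp (a / s - c) - 1) (exp (a / t - c) * (a * -(t ^ 2)⁻¹)) t :=
    (((hasDerivAt_inv ht).const_mul a).sub_const c).exp.sub_const 1
  refine ((hasDerivAt_id' t).mul hexp).congr_deriv ?_
  field_simp
  ring

lemma antitoneOn_mul_exp_div_sub_sub_one (a : ℝ) {c : ℝ} (hc : 0 ≤ c) :
    AntitoneOn (fun t => t * (exp (a / t - c) - 1)) (Ioi 0) := by
  have hderiv : ∀ t ∈ Ioi (0 : ℝ), HasDerivAt (fun s => s * (exp (a / s - c) - 1))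
      (exp (a / t - c) * (1 - a / t) - 1) t :=
    fun t ht => hasDerivAt_mul_exp_div_sub_sub_one a c (ne_of_gt ht)
  refine antitoneOn_of_hasDerivWithinAt_nonpos (convex_Ioi 0)
    (fun t ht => (hderiv t ht).continuousAt.continuousWithinAt)
    (fun t ht => (hderiv t (interior_subset ht)).hasDerivWithinAt) fun t _ => ?_
  have hsplit : exp (a / t - c) * (1 - a / t) = exp (a / t) * (1 - a / t) * exp (-c) := by
    rw [sub_eq_add_neg, exp_add]
    ring
  have hle : exp (a / t) * (1 - a / t) * exp (-c) ≤ 1 :=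
    mul_le_one₀ (exp_mul_one_sub_le_one _) (exp_pos _).le (exp_le_one_iff.mpr (neg_nonpos.mpr hc))
  linarith

lemma antitoneOn_mul_rpow_sub_one {b k : ℝ} (T : ℝ) (hb : 1 ≤ b) (hk : 0 ≤ k) :
    AntitoneOn (fun t => t * (b ^ ((T - t) / (k * t)) - 1)) (Ioi 0) := by
  refine (antitoneOn_mul_exp_div_sub_sub_one (log b * T / k)
    (div_nonneg (log_nonneg hb) hk)).congr fun t ht => ?_
  have hexponent : log b * T / k / t - log b / k = log b * ((T - t) / (k * t)) := by
    rw [mul_comm k t, ← div_div, sub_div, div_self (ne_of_gt ht)]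
    ring
  simp only [hexponent, rpow_def_of_pos (zero_lt_one.trans_le hb)]

theorem wireless_power_decreasing_general
    (N0 B h η T0 R β α T : ℝ)
    (hN0 : 0 < N0) (hB : 0 < B) (hh : 0 < h) (hη : 0 < η) (hT0 : 0 < T0)
    (hR : 0 < R) (hβ : 0 < β) (hα : 0 < α)
    (P : ℝ → ℝ)
    (hP : ∀ t, P t =
      (1 / (h * η * T0)) *
        ((t / h) * (N0 * ((2 : ℝ) ^ ((T - t) / (R * β * t) / B) - 1))
          + α * (T - t) / β)) :
    StrictAntiOn P (Ioc 0 T) ∧ P T = 0 ∧ ∀ t ∈ Ioo 0 T, 0 < P t := by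
  have hrate : ∀ t, (T - t) / (R * β * t) / B = (T - t) / (R * β * B * t) := fun t => by ring
  have hpower := antitoneOn_mul_rpow_sub_one T one_le_two (by positivity : 0 ≤ R * β * B)
  have hanti : StrictAntiOn P (Ioc 0 T) := by
    intro s hs t ht hst
    have hle := hpower hs.1 ht.1 hst.le
    simp only [← hrate] at hle
    rw [hP, hP]
    refine mul_lt_mul_of_pos_left ?_ (by positivity)
    have hpow := mul_le_mul_of_nonneg_left hle (by positivity : 0 ≤ N0 / h)
    have hlin : α * (T - t) / β < α * (T - s) / β := by gcongr
    calc t / h * (N0 * ((2 : ℝ) ^ ((T - t) / (R * β * t) / B) - 1)) + α * (T - t) / β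
        = N0 / h * (t * ((2 : ℝ) ^ ((T - t) / (R * β * t) / B) - 1)) + α * (T - t) / β := by ring
      _ < N0 / h * (s * ((2 : ℝ) ^ ((T - s) / (R * β * s) / B) - 1)) + α * (T - s) / β := by
        linarith
      _ = s / h * (N0 * ((2 : ℝ) ^ ((T - s) / (R * β * s) / B) - 1)) + α * (T - s) / β := by ring
  have hPT : P T = 0 := by simp [hP]
  exact ⟨hanti, hPT, fun t ht =>
    hPT ▸ hanti ⟨ht.1, ht.2.le⟩ ⟨ht.1.trans ht.2, le_rfl⟩ ht.2⟩

/-- The wireless-power function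
`P(t) = (1/(h η T₀)) [(t/h) f((T−t)/(R β t)) + α (T−t)/β]`, with
`f(x) = N₀(2^{x/B}−1)`, is strictly decreasing on `(0, T]`, vanishes at `T`,
and is strictly positive on `(0, T)`. -/
theorem wireless_power_decreasing
    (N0 B h η T0 R β α T : ℝ)
    (hN0 : 0 < N0) (hB : 0 < B) (hh : 0 < h) (hη : 0 < η) (hT0 : 0 < T0)
    (hR : 0 < R) (hβ : 0 < β) (hα : 0 < α) (hT : 0 < T)
    (P : ℝ → ℝ)
    (hP : ∀ t, P t =
      (1 / (h * η * T0)) *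
        ((t / h) * (N0 * ((2 : ℝ) ^ ((T - t) / (R * β * t) / B) - 1))
          + α * (T - t) / β)) :
    StrictAntiOn P (Ioc 0 T) ∧ P T = 0 ∧ ∀ t ∈ Ioo 0 T, 0 < P t :=
  wireless_power_decreasing_general N0 B h η T0 R β α T hN0 hB hh hη hT0 hR hβ hα P hP
end

section
/- Fix λ ≥ 0 and define the per-sensor Lagrangian L(t) = (λ+c)·[α·(T−t)/(η·β·h) + (t/(η·h²))·f((T−t)/(R·β·t))] − a·log(1 + (T−t)/β) on (0, T]. Then the derivative of L at t = T is strictly negative if and only if λ > φ, where φ = a·η·h/(α + N₀·ln 2/(h·B·R)) − c is the crowd-sensing priority function. -/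
open Real

/-!
Only the transmission-energy term `t · f((T−t)/(Rβt))` needs care: since `f 0 = 0`, the
product rule leaves just `T · f'(0) · d/dt[(T−t)/(Rβt)]|_{t=T} = −f'(0)/(Rβ)`, with
`f'(0) = N₀ ln 2 / B`. Collecting terms, `L'(T) = (a − (λ+c)·D/(ηh))/β` with
`D = α + N₀ ln 2/(hBR) > 0`, whose sign is that of `aηh/D − (λ+c)`.
-/

/-- The transmission energy `f(x) = N₀ (2^{x/B} − 1)`. -/
noncomputable def transmitEnergy (N0 B x : ℝ) : ℝ :=
  N0 * ((2 : ℝ) ^ (x / B) - 1)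

theorem transmitEnergy_zero (N0 B : ℝ) : transmitEnergy N0 B 0 = 0 := by
  simp [transmitEnergy]

theorem hasDerivAt_transmitEnergy_zero (N0 B : ℝ) :
    HasDerivAt (transmitEnergy N0 B) (N0 * log 2 / B) 0 := by
  have hexp : HasDerivAt (fun x : ℝ => x / B) (1 / B) 0 := (hasDerivAt_id 0).div_const B
  have hpow := (Real.hasStrictDerivAt_const_rpow two_pos (0 / B)).hasDerivAt.comp 0 hexp
  refine ((hpow.sub_const 1).const_mul N0).congr_deriv ?_
  simp only [zero_div, rpow_zero]
  ring

theorem hasDerivAt_mul_comp_div_sub {f : ℝ → ℝ} {f' k T : ℝ} (hf0 : f 0 = 0)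
    (hf : HasDerivAt f f' 0) (hk : k ≠ 0) (hT : T ≠ 0) :
    HasDerivAt (fun t => t * f ((T - t) / (k * t))) (-(f' / k)) T := by
  have hs : HasDerivAt (fun t => (T - t) / (k * t)) (-(1 / (k * T))) T := by
    refine (((hasDerivAt_id' (x := T)).const_sub T).div ((hasDerivAt_id' (x := T)).const_mul k)
      (mul_ne_zero hk hT)).congr_deriv ?_
    field_simp
    ring
  have hsT : (T - T) / (k * T) = 0 := by simp
  have hfs : HasDerivAt (fun t => f ((T - t) / (k * t))) (f' * -(1 / (k * T))) T :=
    (hsT ▸ hf).comp T hs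
  refine ((hasDerivAt_id' (x := T)).mul hfs).congr_deriv ?_
  rw [hsT, hf0]
  field_simp
  ring

theorem hasDerivAt_log_one_add_sub_div (T β : ℝ) :
    HasDerivAt (fun t => log (1 + (T - t) / β)) (-(1 / β)) T := by
  have hg : HasDerivAt (fun t => 1 + (T - t) / β) (-1 / β) T :=
    (((hasDerivAt_id T).const_sub T).div_const β).const_add 1
  refine (hg.log (by simp)).congr_deriv ?_
  simp [neg_div]

noncomputable def sensorLagrangian (N0 B a c α β h R η T lam t : ℝ) : ℝ :=
  (lam + c) * (α * (T - t) / (η * β * h)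
      + (t / (η * h ^ 2)) * transmitEnergy N0 B ((T - t) / (R * β * t)))
    - a * log (1 + (T - t) / β)

theorem hasDerivAt_sensorLagrangian (N0 B a c α β h R η T lam : ℝ)
    (hβ : β ≠ 0) (hR : R ≠ 0) (hT : T ≠ 0) :
    HasDerivAt (sensorLagrangian N0 B a c α β h R η T lam)
      (a / β - (lam + c) * (α + N0 * log 2 / (h * B * R)) / (η * h) / β) T := by
  have hlin : HasDerivAt (fun t => α * (T - t) / (η * β * h)) (α * -1 / (η * β * h)) T :=
    (((hasDerivAt_id T).const_sub T).const_mul α).div_const _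
  have henergy : HasDerivAt
      (fun t => t * transmitEnergy N0 B ((T - t) / (R * β * t))) (-(N0 * log 2 / B / (R * β))) T :=
    hasDerivAt_mul_comp_div_sub (transmitEnergy_zero N0 B) (hasDerivAt_transmitEnergy_zero N0 B)
      (mul_ne_zero hR hβ) hT
  have hscaled : HasDerivAt
      (fun t => t / (η * h ^ 2) * transmitEnergy N0 B ((T - t) / (R * β * t)))
      ((η * h ^ 2)⁻¹ * -(N0 * log 2 / B / (R * β))) T := by
    refine (henergy.const_mul (η * h ^ 2)⁻¹).congr_of_eventuallyEq ?_
    filter_upwards with t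
    ring
  refine (((hlin.add hscaled).const_mul (lam + c)).sub
    ((hasDerivAt_log_one_add_sub_div T β).const_mul a)).congr_deriv ?_
  ring

theorem priority_function_threshold_general
    (N0 B a c α β h R η T lam : ℝ)
    (hN0 : 0 < N0) (hB : 0 < B) (hα : 0 < α)
    (hβ : 0 < β) (hh : 0 < h) (hR : 0 < R) (hη : 0 < η) (hT : 0 < T) :
    deriv
        (fun t : ℝ =>
          (lam + c) * (α * (T - t) / (η * β * h)
            + (t / (η * h ^ 2)) *
              (N0 * ((2 : ℝ) ^ ((T - t) / (R * β * t) / B) - 1)))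
          - a * Real.log (1 + (T - t) / β)) T < 0
      ↔ lam > a * η * h / (α + N0 * Real.log 2 / (h * B * R)) - c := by
  have hD : 0 < α + N0 * log 2 / (h * B * R) := by
    have := log_pos one_lt_two
    positivity
  change deriv (sensorLagrangian N0 B a c α β h R η T lam) T < 0 ↔ _
  rw [(hasDerivAt_sensorLagrangian N0 B a c α β h R η T lam hβ.ne' hR.ne' hT.ne').deriv,
    sub_neg, div_lt_div_iff_of_pos_right hβ, lt_div_iff₀ (by positivity), gt_iff_lt,
    sub_lt_iff_lt_add, div_lt_iff₀ hD, mul_assoc a]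

/-- The derivative of the per-sensor Lagrangian
`L(t) = (λ+c)[α(T−t)/(ηβh) + (t/(ηh²)) f((T−t)/(Rβt))] − a log(1+(T−t)/β)`,
with `f(x) = N₀(2^{x/B}−1)`, is strictly negative at `t = T` if and only if
`λ > φ`, where `φ = aηh/(α + N₀ ln 2/(hBR)) − c` is the crowd-sensing
priority function. -/
theorem priority_function_threshold
    (N0 B a c α β h R η T lam : ℝ)
    (hN0 : 0 < N0) (hB : 0 < B) (ha : 0 < a) (hc : 0 < c) (hα : 0 < α)
    (hβ : 0 < β) (hh : 0 < h) (hR : 0 < R) (hη : 0 < η) (hT : 0 < T)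
    (hlam : 0 ≤ lam) :
    deriv
        (fun t : ℝ =>
          (lam + c) * (α * (T - t) / (η * β * h)
            + (t / (η * h ^ 2)) *
              (N0 * ((2 : ℝ) ^ ((T - t) / (R * β * t) / B) - 1)))
          - a * Real.log (1 + (T - t) / β)) T < 0
      ↔ lam > a * η * h / (α + N0 * Real.log 2 / (h * B * R)) - c :=
  priority_function_threshold_general N0 B a c α β h R η T lam hN0 hB hα hβ hh hR hη hT
end

section
/- For all positive reals T, B, R, β and every t ∈ (0, T], the inequality (1 − T·ln 2/(B·R·β·t))·2^{(T−t)/(B·R·β·t)} < 1 holds. -/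
open Real Set

/-- For all positive `T, B, R, β` and every `t ∈ (0, T]`,
`(1 − T ln 2/(B R β t)) · 2^{(T−t)/(B R β t)} < 1`. -/
theorem power_derivative_inequality
    (T B R β : ℝ) (hT : 0 < T) (hB : 0 < B) (hR : 0 < R) (hβ : 0 < β) :
    ∀ t ∈ Ioc 0 T,
      (1 - T * Real.log 2 / (B * R * β * t)) *
          (2 : ℝ) ^ ((T - t) / (B * R * β * t)) < 1 := by
  rintro t ⟨ht0, htT⟩
  set c := B * R * β * t with hc
  have hc0 : 0 < c := by positivity
  have hlog2 : 0 < Real.log 2 := Real.log_pos one_lt_two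
  set u := T * Real.log 2 / c with hu
  have hu0 : 0 < u := by positivity
  have hE : (2 : ℝ) ^ ((T - t) / c) = Real.exp (Real.log 2 * ((T - t) / c)) :=
    Real.rpow_def_of_pos two_pos _
  rw [hE]
  have hle : Real.log 2 * ((T - t) / c) ≤ u := by
    rw [hu, ← mul_div_assoc, mul_comm]
    gcongr
    linarith
  have hexp_le : Real.exp (Real.log 2 * ((T - t) / c)) ≤ Real.exp u :=
    Real.exp_le_exp.2 hle
  have hEpos : 0 < Real.exp (Real.log 2 * ((T - t) / c)) := Real.exp_pos _
  by_cases h1 : 1 - u ≤ 0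
  · nlinarith
  · push_neg at h1
    have key : -u + 1 < Real.exp (-u) := Real.add_one_lt_exp (by linarith [hu0] : -u ≠ 0)
    have hmul : Real.exp (-u) * Real.exp u = 1 := by
      rw [← Real.exp_add]; simp
    have hEu : 0 < Real.exp u := Real.exp_pos u
    nlinarith
end

section
/- Consider Problem P1-B for one sensor with fixed data size ℓ > 0: minimize (q_r + q_s + q_c·C(R,ε))·ℓ + (t/h)·f(ℓ/(t·R)) over R ∈ [1, R_max] and t > 0 subject to the time constraint ℓ/s + ℓ·C(R,ε)/f_cpu + t ≤ T. If (R*, t*) is a minimizer with t* > 0, then the time constraint holds with equality: ℓ/s + ℓ·C(R*,ε)/f_cpu + t* = T. -/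
/-!
The objective depends on `t` only through the transmission energy `(t / h) · f(ℓ / (t R))`, which
is the perspective of the strictly convex Shannon power `f` (with `f 0 = 0`): up to the factor
`ℓ / (R h)` it is the secant slope `f(x) / x` at `x = ℓ / (t R)`, and that slope decreases as `t`
grows. So any slack in the time constraint could be spent on a longer transmission at the same `R`,
strictly lowering the cost.
-/

open Real Set

theorem strictConvexOn_mul_two_rpow_div_sub_one {N0 B : ℝ} (hN0 : 0 < N0) (hB : 0 < B) :
    StrictConvexOn ℝ univ fun x : ℝ ↦ N0 * ((2 : ℝ) ^ (x / B) - 1) := by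
  refine ⟨convex_univ, fun x _ y _ hxy a b ha hb hab ↦ ?_⟩
  have hk : 0 < log 2 / B := div_pos (log_pos one_lt_two) hB
  have hexp := strictConvexOn_exp.2 (mem_univ (log 2 / B * x)) (mem_univ (log 2 / B * y))
    (by simpa [hk.ne'] using hxy) ha hb hab
  simp only [rpow_def_of_pos two_pos, smul_eq_mul] at hexp ⊢
  have harg : ∀ z, log 2 * (z / B) = log 2 / B * z := fun z ↦ by ring
  have hmix : log 2 / B * (a * x + b * y) = a * (log 2 / B * x) + b * (log 2 / B * y) := by ring
  rw [harg, harg, harg, hmix]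
  nlinarith [mul_lt_mul_of_pos_left hexp hN0]

theorem StrictConvexOn.strictAntiOn_mul_apply_div {f : ℝ → ℝ} (hf : StrictConvexOn ℝ (Ici 0) f)
    (hf0 : f 0 = 0) {a : ℝ} (ha : 0 < a) : StrictAntiOn (fun t ↦ t * f (a / t)) (Ioi 0) := by
  intro t ht t' ht' htt'
  have hslope := hf.secant_strict_mono (mem_Ici.2 le_rfl) (mem_Ici.2 (div_pos ha ht').le)
    (mem_Ici.2 (div_pos ha ht).le) (div_pos ha ht').ne' (div_pos ha ht).ne'
    (div_lt_div_of_pos_left ha ht htt')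
  simp only [hf0, sub_zero, div_div_eq_mul_div] at hslope
  rw [div_lt_div_iff_of_pos_right ha, mul_comm, mul_comm (f _)] at hslope
  exact hslope

theorem transmissionEnergy_strictAntiOn {N0 B h ℓ R : ℝ} (hN0 : 0 < N0) (hB : 0 < B)
    (hh : 0 < h) (hℓ : 0 < ℓ) (hR : 0 < R) :
    StrictAntiOn (fun t ↦ (t / h) * (N0 * ((2 : ℝ) ^ (ℓ / (t * R) / B) - 1))) (Ioi 0) := by
  intro t ht t' ht' htt'
  have hpersp := ((strictConvexOn_mul_two_rpow_div_sub_one hN0 hB).subset (subset_univ _) (convex_Ici 0)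
    |>.strictAntiOn_mul_apply_div (by simp) (div_pos hℓ hR)) ht ht' htt'
  have henergy : ∀ t, (t / h) * (N0 * ((2 : ℝ) ^ (ℓ / (t * R) / B) - 1))
      = h⁻¹ * (t * (N0 * ((2 : ℝ) ^ (ℓ / R / t / B) - 1))) := fun t ↦ by
    rw [div_div ℓ R, mul_comm R]; ring
  simp only [henergy]
  exact mul_lt_mul_of_pos_left hpersp (inv_pos.2 hh)

theorem P1B_time_constraint_tight_general
    (N0 B qr qs qc h s fcpu T ℓ ε Rmax : ℝ)
    (hN0 : 0 < N0) (hB : 0 < B)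
    (hh : 0 < h) (hℓ : 0 < ℓ)
    (Rstar tstar : ℝ)
    (hR1 : 1 ≤ Rstar) (hR2 : Rstar ≤ Rmax) (ht : 0 < tstar)
    (htime : ℓ / s + ℓ * (Real.exp (ε * Rstar) - Real.exp ε) / fcpu + tstar ≤ T)
    (hopt : ∀ R t : ℝ, 1 ≤ R → R ≤ Rmax → 0 < t →
      ℓ / s + ℓ * (Real.exp (ε * R) - Real.exp ε) / fcpu + t ≤ T →
      (qr + qs + qc * (Real.exp (ε * Rstar) - Real.exp ε)) * ℓ
          + (tstar / h) * (N0 * ((2 : ℝ) ^ (ℓ / (tstar * Rstar) / B) - 1))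
        ≤ (qr + qs + qc * (Real.exp (ε * R) - Real.exp ε)) * ℓ
          + (t / h) * (N0 * ((2 : ℝ) ^ (ℓ / (t * R) / B) - 1))) :
    ℓ / s + ℓ * (Real.exp (ε * Rstar) - Real.exp ε) / fcpu + tstar = T := by
  by_contra hne
  have hslack : tstar < T - (ℓ / s + ℓ * (Real.exp (ε * Rstar) - Real.exp ε) / fcpu) := by
    linarith [htime.lt_of_ne hne]
  have hlonger_t_cheaper := transmissionEnergy_strictAntiOn hN0 hB hh hℓ
    (zero_lt_one.trans_le hR1) ht (ht.trans hslack) hslack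
  have hmin := hopt Rstar _ hR1 hR2 (ht.trans hslack) (by linarith)
  dsimp only at hlonger_t_cheaper
  linarith

/-- At a minimizer of Problem P1-B (single sensor, fixed data size `ℓ`) with
positive transmission duration, the crowd-sensing time constraint is tight. -/
theorem P1B_time_constraint_tight
    (N0 B qr qs qc h s fcpu T ℓ ε Rmax : ℝ)
    (hN0 : 0 < N0) (hB : 0 < B) (hqr : 0 < qr) (hqs : 0 < qs) (hqc : 0 < qc)
    (hh : 0 < h) (hs : 0 < s) (hfcpu : 0 < fcpu) (hT : 0 < T) (hℓ : 0 < ℓ)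
    (hε : 0 < ε) (hRmax : 1 ≤ Rmax)
    (Rstar tstar : ℝ)
    (hR1 : 1 ≤ Rstar) (hR2 : Rstar ≤ Rmax) (ht : 0 < tstar)
    (htime : ℓ / s + ℓ * (Real.exp (ε * Rstar) - Real.exp ε) / fcpu + tstar ≤ T)
    (hopt : ∀ R t : ℝ, 1 ≤ R → R ≤ Rmax → 0 < t →
      ℓ / s + ℓ * (Real.exp (ε * R) - Real.exp ε) / fcpu + t ≤ T →
      (qr + qs + qc * (Real.exp (ε * Rstar) - Real.exp ε)) * ℓ
          + (tstar / h) * (N0 * ((2 : ℝ) ^ (ℓ / (tstar * Rstar) / B) - 1))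
        ≤ (qr + qs + qc * (Real.exp (ε * R) - Real.exp ε)) * ℓ
          + (t / h) * (N0 * ((2 : ℝ) ^ (ℓ / (t * R) / B) - 1))) :
    ℓ / s + ℓ * (Real.exp (ε * Rstar) - Real.exp ε) / fcpu + tstar = T :=
  P1B_time_constraint_tight_general N0 B qr qs qc h s fcpu T ℓ ε Rmax hN0 hB hh hℓ Rstar tstar hR1
    hR2 ht htime hopt
end

section
/- Define d(R) = T/ℓ − 1/s − C(R,ε)/f_cpu and z(R) = [q_c − (1/(h·f_cpu))·g(1/(d(R)·R))]·ε·e^{εR} − (1/(h·R²))·f′(1/(d(R)·R)), where g(x) = f(x) − x·f′(x) and f′(x) = (N₀·ln 2/B)·2^{x/B}. If d(R) > 0 for all R ∈ [1, R_max], then z is strictly increasing on [1, R_max]. -/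
/-!
Differentiate `z`. Since `g' = -x f''` and `d' = -C'/f_cpu`, the two terms of `z'` containing
`f''(u)`, `u = 1/(d R · R)`, combine into the perfect square `f''(u) (C' R/f_cpu - d)² / (h d³ R⁴)`.
The remaining terms are `C'' (q_c - g(u)/(h f_cpu))` and `2 f'(u)/(h R³)`: the first is positive
because `g ≤ 0` on `[0, ∞)` (`g 0 = 0` and `g' ≤ 0` there), the second nonnegative as `f' ≥ 0`.
-/

open Real Set

theorem hasDerivAt_rpow_div {b : ℝ} (hb : 0 < b) (B x : ℝ) :
    HasDerivAt (fun x ↦ b ^ (x / B)) (log b / B * b ^ (x / B)) x :=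
  ((hasDerivAt_id' x).div_const B).const_rpow hb |>.congr_deriv (by ring)

theorem hasDerivAt_sub_mul_deriv {F F' : ℝ → ℝ} {F'' x : ℝ} (hF : HasDerivAt F (F' x) x)
    (hF' : HasDerivAt F' F'' x) : HasDerivAt (fun x ↦ F x - x * F' x) (-(x * F'')) x :=
  hF.fun_sub ((hasDerivAt_id' x).fun_mul hF') |>.congr_deriv (by ring)

theorem nonpos_of_hasDerivAt_neg_mul {g k : ℝ → ℝ} (hg : ∀ x, HasDerivAt g (-(x * k x)) x)
    (hk : ∀ x, 0 < x → 0 ≤ k x) (hg0 : g 0 ≤ 0) {x : ℝ} (hx : 0 ≤ x) : g x ≤ 0 := by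
  have hanti : AntitoneOn g (Ici 0) := by
    refine antitoneOn_of_hasDerivWithinAt_nonpos (convex_Ici 0)
      (fun x _ ↦ (hg x).continuousAt.continuousWithinAt) (fun x _ ↦ (hg x).hasDerivWithinAt)
      fun x hx ↦ ?_
    rw [interior_Ici] at hx
    exact neg_nonpos.mpr (mul_nonneg hx.le (hk x hx))
  exact (hanti self_mem_Ici hx hx).trans hg0

namespace CompressionRatio

/-- The paper's `z`, with the complexity `C(·, ε)` generalized to any function whose derivative
in `R` is `c'`. -/
noncomputable def z (qc h fcpu : ℝ) (f' g d c' : ℝ → ℝ) (R : ℝ) : ℝ :=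
  (qc - 1 / (h * fcpu) * g (1 / (d R * R))) * c' R - 1 / (h * R ^ 2) * f' (1 / (d R * R))

section
variable {qc h fcpu : ℝ} {f' f'' g d c' : ℝ → ℝ}

theorem hasDerivAt_z {R c'' : ℝ} (hf' : ∀ x, HasDerivAt f' (f'' x) x)
    (hg : ∀ x, HasDerivAt g (-(x * f'' x)) x) (hc' : HasDerivAt c' c'' R)
    (hd : HasDerivAt d (-c' R / fcpu) R) (hR : R ≠ 0) (hdR : d R ≠ 0) (hh : h ≠ 0)
    (hfcpu : fcpu ≠ 0) :
    HasDerivAt (z qc h fcpu f' g d c')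
      (c'' * (qc - g (1 / (d R * R)) / (h * fcpu)) + 2 * f' (1 / (d R * R)) / (h * R ^ 3)
        + f'' (1 / (d R * R)) * (c' R * R / fcpu - d R) ^ 2 / (h * d R ^ 3 * R ^ 4)) R := by
  have hu := (hasDerivAt_const R (1 : ℝ)).fun_div (hd.fun_mul (hasDerivAt_id' R))
    (mul_ne_zero hdR hR)
  have hR2 := (hasDerivAt_const R (1 : ℝ)).fun_div ((hasDerivAt_pow 2 R).const_mul h)
    (mul_ne_zero hh (pow_ne_zero 2 hR))
  have hz : HasDerivAt (z qc h fcpu f' g d c') _ R :=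
    ((((hg _).comp R hu).const_mul (1 / (h * fcpu))).const_sub qc).fun_mul hc' |>.fun_sub
      (hR2.fun_mul ((hf' _).comp R hu))
  refine hz.congr_deriv ?_
  simp only [Function.comp_apply]
  field_simp
  ring

theorem strictMonoOn_z {D : Set ℝ} {c'' : ℝ → ℝ} (hf' : ∀ x, HasDerivAt f' (f'' x) x)
    (hg : ∀ x, HasDerivAt g (-(x * f'' x)) x) (hc' : ∀ R ∈ D, HasDerivAt c' (c'' R) R)
    (hd : ∀ R ∈ D, HasDerivAt d (-c' R / fcpu) R) (hf'_nonneg : ∀ x, 0 < x → 0 ≤ f' x)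
    (hf''_nonneg : ∀ x, 0 < x → 0 ≤ f'' x) (hg0 : g 0 ≤ 0) (hc''_pos : ∀ R ∈ D, 0 < c'' R)
    (hqc : 0 < qc) (hh : 0 < h) (hfcpu : 0 < fcpu) (hD : Convex ℝ D)
    (hD_pos : ∀ R ∈ D, 0 < R ∧ 0 < d R) :
    StrictMonoOn (z qc h fcpu f' g d c') D := by
  have hz := fun R (hR : R ∈ D) ↦ hasDerivAt_z (qc := qc) hf' hg (hc' R hR) (hd R hR)
    (hD_pos R hR).1.ne' (hD_pos R hR).2.ne' hh.ne' hfcpu.ne'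
  refine strictMonoOn_of_hasDerivWithinAt_pos hD
    (fun R hR ↦ (hz R hR).continuousAt.continuousWithinAt)
    (fun R hR ↦ (hz R (interior_subset hR)).hasDerivWithinAt) fun R hR ↦ ?_
  have hRD := interior_subset hR
  obtain ⟨hR, hdR⟩ := hD_pos R hRD
  have hu : 0 < 1 / (d R * R) := by positivity
  have hgu : g (1 / (d R * R)) ≤ 0 := nonpos_of_hasDerivAt_neg_mul hg hf''_nonneg hg0 hu.le
  have hc'' := hc''_pos R hRD
  have hf'u := hf'_nonneg _ hu
  have hf''u := hf''_nonneg _ hu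
  have hgu' : g (1 / (d R * R)) / (h * fcpu) ≤ 0 :=
    div_nonpos_of_nonpos_of_nonneg hgu (by positivity)
  have hqc_sub : 0 < qc - g (1 / (d R * R)) / (h * fcpu) := by linarith
  positivity

end

end CompressionRatio

theorem z_strictly_increasing_general
    (N0 B qc h fcpu s T ℓ ε Rmax : ℝ)
    (hN0 : 0 < N0) (hB : 0 < B) (hqc : 0 < qc) (hh : 0 < h)
    (hfcpu : 0 < fcpu)
    (hε : 0 < ε)
    (f' g d z : ℝ → ℝ)
    (hf' : ∀ x, f' x = N0 * Real.log 2 / B * (2 : ℝ) ^ (x / B))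
    (hg : ∀ x, g x = N0 * ((2 : ℝ) ^ (x / B) - 1) - x * f' x)
    (hd : ∀ R, d R = T / ℓ - 1 / s - (Real.exp (ε * R) - Real.exp ε) / fcpu)
    (hz : ∀ R, z R =
      (qc - (1 / (h * fcpu)) * g (1 / (d R * R))) * ε * Real.exp (ε * R)
        - (1 / (h * R ^ 2)) * f' (1 / (d R * R)))
    (hdpos : ∀ R ∈ Icc 1 Rmax, 0 < d R) :
    StrictMonoOn z (Icc 1 Rmax) := by
  set f'' := fun x ↦ N0 * log 2 / B * (log 2 / B * (2 : ℝ) ^ (x / B))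
  have hf'_deriv (x : ℝ) : HasDerivAt f' (f'' x) x := by
    rw [funext hf']
    exact (hasDerivAt_rpow_div two_pos B x).const_mul _
  have hg_deriv (x : ℝ) : HasDerivAt g (-(x * f'' x)) x := by
    rw [funext hg]
    refine hasDerivAt_sub_mul_deriv (((hasDerivAt_rpow_div two_pos B x).sub_const 1).const_mul N0
      |>.congr_deriv ?_) (hf'_deriv x)
    rw [hf']
    ring
  have hd_deriv (R : ℝ) : HasDerivAt d (-(ε * exp (ε * R)) / fcpu) R := by
    rw [funext hd]
    exact (((((hasDerivAt_id' R).const_mul ε).exp.sub_const _).div_const fcpu).const_sub _)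
      |>.congr_deriv (by ring)
  have hz_eq : z = CompressionRatio.z qc h fcpu f' g d (fun R ↦ ε * exp (ε * R)) :=
    funext fun R ↦ by rw [hz, CompressionRatio.z]; ring
  rw [hz_eq]
  refine CompressionRatio.strictMonoOn_z hf'_deriv hg_deriv
    (fun R _ ↦ ((hasDerivAt_id' R).const_mul ε).exp.const_mul ε) (fun R _ ↦ hd_deriv R)
    (fun x _ ↦ by rw [hf']; positivity) (fun x _ ↦ by positivity) (by simp [hg])
    (fun R _ ↦ by positivity) hqc hh hfcpu (convex_Icc 1 Rmax)
    fun R hR ↦ ⟨zero_lt_one.trans_le hR.1, hdpos R hR⟩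

/-- The function `z(R)` characterizing the optimal lossless compression ratio
in Problem P1-B is strictly increasing on `[1, R_max]`, provided
`d(R) = T/ℓ − 1/s − C(R,ε)/f_cpu > 0` there.  Here `f(x) = N₀(2^{x/B}−1)`,
`f′(x) = (N₀ ln 2/B) 2^{x/B}`, `g(x) = f(x) − x f′(x)`, and
`C(R,ε) = e^{εR} − e^{ε}`. -/
theorem z_strictly_increasing
    (N0 B qc h fcpu s T ℓ ε Rmax : ℝ)
    (hN0 : 0 < N0) (hB : 0 < B) (hqc : 0 < qc) (hh : 0 < h)
    (hfcpu : 0 < fcpu) (hs : 0 < s) (hT : 0 < T) (hℓ : 0 < ℓ)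
    (hε : 0 < ε) (hRmax : 1 ≤ Rmax)
    (f' g d z : ℝ → ℝ)
    (hf' : ∀ x, f' x = N0 * Real.log 2 / B * (2 : ℝ) ^ (x / B))
    (hg : ∀ x, g x = N0 * ((2 : ℝ) ^ (x / B) - 1) - x * f' x)
    (hd : ∀ R, d R = T / ℓ - 1 / s - (Real.exp (ε * R) - Real.exp ε) / fcpu)
    (hz : ∀ R, z R =
      (qc - (1 / (h * fcpu)) * g (1 / (d R * R))) * ε * Real.exp (ε * R)
        - (1 / (h * R ^ 2)) * f' (1 / (d R * R)))
    (hdpos : ∀ R ∈ Icc 1 Rmax, 0 < d R) :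
    StrictMonoOn z (Icc 1 Rmax) :=
  z_strictly_increasing_general N0 B qc h fcpu s T ℓ ε Rmax hN0 hB hqc hh hfcpu hε f' g d z hf' hg
    hd hz hdpos
end

section
/- Define d(R) = T/ℓ − 1/s − C(R,ε)/f_cpu and φ(R) = (1/f_cpu)·g(1/(d(R)·R)) + (1/(R²·ε·e^{εR}))·f′(1/(d(R)·R)), where g(x) = f(x) − x·f′(x) and f′(x) = (N₀·ln 2/B)·2^{x/B}. If d(R) > 0 for all R ∈ [1, R_max], then φ is strictly decreasing on [1, R_max]. -/
open Real Set

/-- The function `φ(R)` from the first-order optimality condition for the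
compression ratio in Problem P1-B is strictly decreasing on `[1, R_max]`,
provided `d(R) = T/ℓ − 1/s − C(R,ε)/f_cpu > 0` there.  Here
`f(x) = N₀(2^{x/B}−1)`, `f′(x) = (N₀ ln 2/B) 2^{x/B}`, `g(x) = f(x) − x f′(x)`,
and `C(R,ε) = e^{εR} − e^{ε}`. -/
theorem phi_strictly_decreasing
    (N0 B h fcpu s T ℓ ε Rmax : ℝ)
    (hN0 : 0 < N0) (hB : 0 < B) (hh : 0 < h)
    (hfcpu : 0 < fcpu) (hs : 0 < s) (hT : 0 < T) (hℓ : 0 < ℓ)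
    (hε : 0 < ε) (hRmax : 1 ≤ Rmax)
    (f' g d φ : ℝ → ℝ)
    (hf' : ∀ x, f' x = N0 * Real.log 2 / B * (2 : ℝ) ^ (x / B))
    (hg : ∀ x, g x = N0 * ((2 : ℝ) ^ (x / B) - 1) - x * f' x)
    (hd : ∀ R, d R = T / ℓ - 1 / s - (Real.exp (ε * R) - Real.exp ε) / fcpu)
    (hφ : ∀ R, φ R =
      (1 / fcpu) * g (1 / (d R * R))
        + (1 / (R ^ 2 * ε * Real.exp (ε * R))) * f' (1 / (d R * R)))
    (hdpos : ∀ R ∈ Icc 1 Rmax, 0 < d R) :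
    StrictAntiOn φ (Icc 1 Rmax) := by
  have hφeq : φ = fun R => fcpu⁻¹ *
      (N0 * (Real.exp (Real.log 2 * ((d R * R)⁻¹ / B)) - 1)
        - (d R * R)⁻¹ * (N0 * Real.log 2 / B * Real.exp (Real.log 2 * ((d R * R)⁻¹ / B))))
      + (R ^ 2 * ε * Real.exp (ε * R))⁻¹
          * (N0 * Real.log 2 / B * Real.exp (Real.log 2 * ((d R * R)⁻¹ / B))) := by
    funext R
    simp only [hφ, hg, hf', Real.rpow_def_of_pos two_pos, one_div]
  have hdf : d = fun R => T / ℓ - 1 / s - (Real.exp (ε * R) - Real.exp ε) / fcpu :=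
    funext hd
  have key : ∀ x ∈ Icc 1 Rmax, ∃ y, HasDerivAt φ y x ∧ y < 0 := by
    intro x hx
    have hx1 : (1:ℝ) ≤ x := hx.1
    have hx0 : (0:ℝ) < x := lt_of_lt_of_le one_pos hx1
    have hD : 0 < d x := hdpos x hx
    have hDx : 0 < d x * x := mul_pos hD hx0
    have hE : 0 < Real.exp (ε * x) := Real.exp_pos _
    have hA : 0 < Real.exp (Real.log 2 * ((d x * x)⁻¹ / B)) := Real.exp_pos _
    have hw : 0 < x ^ 2 * ε * Real.exp (ε * x) := by positivity
    -- derivative of exp(ε R)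
    have hde : HasDerivAt (fun R => Real.exp (ε * R)) (Real.exp (ε * x) * ε) x := by
      simpa using ((hasDerivAt_id x).const_mul ε).exp
    -- derivative of d
    have hdd : HasDerivAt d (-((Real.exp (ε * x) * ε) / fcpu)) x := by
      rw [hdf]
      exact ((hde.sub_const (Real.exp ε)).div_const fcpu).const_sub (T / ℓ - 1 / s)
    -- derivative of d R * R
    have hprod : HasDerivAt (fun R => d R * R)
        (-((Real.exp (ε * x) * ε) / fcpu) * x + d x * 1) x :=
      hdd.mul (hasDerivAt_id x)
    -- derivative of (d R * R)⁻¹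
    have hu : HasDerivAt (fun R => (d R * R)⁻¹)
        (-(-((Real.exp (ε * x) * ε) / fcpu) * x + d x * 1) / (d x * x) ^ 2) x :=
      hprod.inv hDx.ne'
    set U' := -(-((Real.exp (ε * x) * ε) / fcpu) * x + d x * 1) / (d x * x) ^ 2 with hU'
    -- derivative of A = exp(log 2 * (u/B))
    have hAd : HasDerivAt (fun R => Real.exp (Real.log 2 * ((d R * R)⁻¹ / B)))
        (Real.exp (Real.log 2 * ((d x * x)⁻¹ / B)) * (Real.log 2 * (U' / B))) x :=
      ((hu.div_const B).const_mul (Real.log 2)).exp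
    set A := Real.exp (Real.log 2 * ((d x * x)⁻¹ / B)) with hAdef
    set A' := A * (Real.log 2 * (U' / B)) with hA'
    -- term 1
    have h1 : HasDerivAt (fun R => N0 * (Real.exp (Real.log 2 * ((d R * R)⁻¹ / B)) - 1))
        (N0 * A') x := (hAd.sub_const 1).const_mul N0
    have h2 : HasDerivAt
        (fun R => (d R * R)⁻¹ * (N0 * Real.log 2 / B * Real.exp (Real.log 2 * ((d R * R)⁻¹ / B))))
        (U' * (N0 * Real.log 2 / B * A) + (d x * x)⁻¹ * (N0 * Real.log 2 / B * A')) x :=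
      hu.mul (hAd.const_mul (N0 * Real.log 2 / B))
    have hT1 : HasDerivAt (fun R => fcpu⁻¹ *
        (N0 * (Real.exp (Real.log 2 * ((d R * R)⁻¹ / B)) - 1)
          - (d R * R)⁻¹ * (N0 * Real.log 2 / B * Real.exp (Real.log 2 * ((d R * R)⁻¹ / B)))))
        (fcpu⁻¹ * (N0 * A' - (U' * (N0 * Real.log 2 / B * A) + (d x * x)⁻¹ * (N0 * Real.log 2 / B * A')))) x :=
      (h1.sub h2).const_mul fcpu⁻¹
    -- term 2
    have hwD : HasDerivAt (fun R => R ^ 2 * ε * Real.exp (ε * R))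
        ((↑2 * x ^ (2 - 1) * ε) * Real.exp (ε * x) + (x ^ 2 * ε) * (Real.exp (ε * x) * ε)) x :=
      ((hasDerivAt_pow 2 x).mul_const ε).mul hde
    have hwinv : HasDerivAt (fun R => (R ^ 2 * ε * Real.exp (ε * R))⁻¹)
        (-((↑2 * x ^ (2 - 1) * ε) * Real.exp (ε * x) + (x ^ 2 * ε) * (Real.exp (ε * x) * ε))
          / (x ^ 2 * ε * Real.exp (ε * x)) ^ 2) x := hwD.inv hw.ne'
    set W' := -((↑2 * x ^ (2 - 1) * ε) * Real.exp (ε * x) + (x ^ 2 * ε) * (Real.exp (ε * x) * ε))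
          / (x ^ 2 * ε * Real.exp (ε * x)) ^ 2 with hW'
    have hT2 : HasDerivAt (fun R => (R ^ 2 * ε * Real.exp (ε * R))⁻¹
        * (N0 * Real.log 2 / B * Real.exp (Real.log 2 * ((d R * R)⁻¹ / B))))
        (W' * (N0 * Real.log 2 / B * A)
          + (x ^ 2 * ε * Real.exp (ε * x))⁻¹ * (N0 * Real.log 2 / B * A')) x :=
      hwinv.mul (hAd.const_mul (N0 * Real.log 2 / B))
    have HD : HasDerivAt φ
        (fcpu⁻¹ * (N0 * A' - (U' * (N0 * Real.log 2 / B * A) + (d x * x)⁻¹ * (N0 * Real.log 2 / B * A')))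
          + (W' * (N0 * Real.log 2 / B * A)
            + (x ^ 2 * ε * Real.exp (ε * x))⁻¹ * (N0 * Real.log 2 / B * A'))) x := by
      rw [hφeq]; exact hT1.add hT2
    refine ⟨_, HD, ?_⟩
    -- show the derivative is negative
    have hQ : 0 < ε * Real.exp (ε * x) / fcpu := by positivity
    set Q := ε * Real.exp (ε * x) / fcpu with hQdef
    have hnice :
        fcpu⁻¹ * (N0 * A' - (U' * (N0 * Real.log 2 / B * A) + (d x * x)⁻¹ * (N0 * Real.log 2 / B * A')))
          + (W' * (N0 * Real.log 2 / B * A)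
            + (x ^ 2 * ε * Real.exp (ε * x))⁻¹ * (N0 * Real.log 2 / B * A'))
        = -(((N0 * Real.log 2 / B) * (Real.log 2 / B) * A * ((d x * x)⁻¹) ^ 2 * (d x - Q * x) ^ 2
              / (d x * x ^ 2 * Q)
            + (N0 * Real.log 2 / B) * A * (2 + ε * x) / (x ^ 3 * Q)) / fcpu) := by
      have hfne : fcpu ≠ 0 := hfcpu.ne'
      have hBne : B ≠ 0 := hB.ne'
      have hDne : d x ≠ 0 := hD.ne'
      have hxne : x ≠ 0 := hx0.ne'
      have hεne : ε ≠ 0 := hε.ne'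
      have hEne : Real.exp (ε * x) ≠ 0 := hE.ne'
      rw [hA', hU', hW', hQdef]
      field_simp
      ring
    rw [hnice]
    have hpos : 0 < (N0 * Real.log 2 / B) * (Real.log 2 / B) * A * ((d x * x)⁻¹) ^ 2 * (d x - Q * x) ^ 2
              / (d x * x ^ 2 * Q)
            + (N0 * Real.log 2 / B) * A * (2 + ε * x) / (x ^ 3 * Q) := by
      have hlog2 : 0 < Real.log 2 := Real.log_pos one_lt_two
      have h1 : 0 ≤ (N0 * Real.log 2 / B) * (Real.log 2 / B) * A * ((d x * x)⁻¹) ^ 2 * (d x - Q * x) ^ 2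
              / (d x * x ^ 2 * Q) := by positivity
      have h2 : 0 < (N0 * Real.log 2 / B) * A * (2 + ε * x) / (x ^ 3 * Q) := by positivity
      linarith
    have := div_pos hpos hfcpu
    linarith
  refine strictAntiOn_of_deriv_neg (convex_Icc 1 Rmax) ?_ ?_
  · intro x hx
    obtain ⟨y, hy, -⟩ := key x hx
    exact hy.continuousAt.continuousWithinAt
  · intro x hx
    rw [interior_Icc] at hx
    obtain ⟨y, hy, hyneg⟩ := key x (Ioo_subset_Icc_self hx)
    rw [hy.deriv]
    exact hyneg
end

section
/- Define d(R) = T/ℓ − 1/s − C(R,ε)/f_cpu and φ(R) = (1/f_cpu)·g(1/(d(R)·R)) + (1/(R²·ε·e^{εR}))·f′(1/(d(R)·R)), where g(x) = f(x) − x·f′(x) and f′(x) = (N₀·ln 2/B)·2^{x/B}, and suppose d(R) > 0 for all R ∈ [1, R_max]. If two sensors have the same per-cycle compression energy q_c > 0 but channel gains h₁ ≥ h₂ > 0, and their compression ratios R₁, R₂ ∈ [1, R_max] satisfy φ(R₁) = q_c·h₁ and φ(R₂) = q_c·h₂, then R₁ ≤ R₂. -/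
/-!
The optimality function `φ` is strictly decreasing on `[1, R_max]`, so `φ R₁ = q_c h₁ ≥ q_c h₂ = φ R₂`
forces `R₁ ≤ R₂`. Write `x = 1 / (d R · R)`, `a = 1 / (R² C'(R))` with `C'(R) = ε e^{εR}`. Since
`g = f - x f'` has `g' = -x f''`, the chain rule gives `φ' = f''(x) · x' · (a - x / f_cpu) + a' f'(x)`,
and `a - x / f_cpu = (d R · R)' / (R² C' d)`, so the first term is
`-f''(x) ((d R · R)')² / (d³ R⁴ C') ≤ 0`, while `a' < 0 < f'(x)`.
-/

open Real Set

lemma strictAntiOn_of_hasDerivAt_neg {D : Set ℝ} (hD : Convex ℝ D) {f : ℝ → ℝ}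
    (hf : ∀ x ∈ D, ∃ f', HasDerivAt f f' x ∧ f' < 0) : StrictAntiOn f D := by
  refine strictAntiOn_of_deriv_neg hD (fun x hx => ?_) fun x hx => ?_
  · obtain ⟨f', hf', -⟩ := hf x hx
    exact hf'.continuousAt.continuousWithinAt
  · obtain ⟨f', hf', hneg⟩ := hf x (interior_subset hx)
    rwa [hf'.deriv]

lemma hasDerivAt_two_rpow_div (B x : ℝ) :
    HasDerivAt (fun x => (2 : ℝ) ^ (x / B)) (log 2 / B * 2 ^ (x / B)) x := by
  simpa [div_eq_mul_inv, mul_comm] using ((hasDerivAt_id x).div_const B).const_rpow two_pos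

lemma hasDerivAt_exp_const_mul (ε R : ℝ) :
    HasDerivAt (fun R => exp (ε * R)) (ε * exp (ε * R)) R :=
  ((hasDerivAt_id' R).const_mul ε).exp.congr_deriv (by ring)

lemma HasDerivAt.sub_id_mul {f f' : ℝ → ℝ} {f'' x : ℝ} (hf : HasDerivAt f (f' x) x)
    (hf' : HasDerivAt f' f'' x) :
    HasDerivAt (fun x => f x - x * f' x) (-x * f'') x :=
  (hf.sub ((hasDerivAt_id' x).fun_mul hf')).congr_deriv (by ring)

lemma HasDerivAt.const_mul_comp_add_mul_comp {p q x a : ℝ → ℝ} {p' x' a' k R : ℝ}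
    (hp : HasDerivAt p p' (x R)) (hq : HasDerivAt q (-x R * p') (x R))
    (hx : HasDerivAt x x' R) (ha : HasDerivAt a a' R) :
    HasDerivAt (fun R => k * q (x R) + a R * p (x R))
      (p' * x' * (a R - k * x R) + a' * p (x R)) R :=
  (((hq.comp R hx).const_mul k).add (ha.mul (hp.comp R hx))).congr_deriv
    (by rw [Function.comp_apply]; ring)

lemma HasDerivAt.one_div_mul_id {d : ℝ → ℝ} {d' R : ℝ} (hd : HasDerivAt d d' R)
    (h : d R * R ≠ 0) :
    HasDerivAt (fun R => 1 / (d R * R)) (-(d' * R + d R) / (d R * R) ^ 2) R :=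
  ((hasDerivAt_const R (1 : ℝ)).fun_div (hd.fun_mul (hasDerivAt_id' R)) h).congr_deriv
    (by ring)

lemma hasDerivAt_one_div_sq_mul_exp {ε R : ℝ} (hε : ε ≠ 0) (hR : R ≠ 0) :
    HasDerivAt (fun R => 1 / (R ^ 2 * ε * exp (ε * R)))
      (-(2 + ε * R) / (R ^ 3 * ε * exp (ε * R))) R := by
  have hden := ((hasDerivAt_pow 2 R).mul_const ε).fun_mul (hasDerivAt_exp_const_mul ε R)
  refine ((hasDerivAt_const R (1 : ℝ)).fun_div hden (by positivity)).congr_deriv ?_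
  field_simp
  ring

lemma hasDerivAt_const_sub_exp_sub_exp_div (K fcpu ε R : ℝ) :
    HasDerivAt (fun R => K - (exp (ε * R) - exp ε) / fcpu) (-(1 / fcpu * (ε * exp (ε * R)))) R :=
  (((hasDerivAt_exp_const_mul ε R).sub_const _).div_const fcpu).const_sub K |>.congr_deriv
    (by ring)

lemma exists_hasDerivAt_neg_of_optimality {N0 B K fcpu ε : ℝ} (hN0 : 0 < N0) (hB : 0 < B)
    (hε : 0 < ε) {f' g d φ : ℝ → ℝ}
    (hf' : ∀ x, f' x = N0 * log 2 / B * (2 : ℝ) ^ (x / B))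
    (hg : ∀ x, g x = N0 * ((2 : ℝ) ^ (x / B) - 1) - x * f' x)
    (hd : ∀ R, d R = K - (exp (ε * R) - exp ε) / fcpu)
    (hφ : ∀ R, φ R = (1 / fcpu) * g (1 / (d R * R))
        + (1 / (R ^ 2 * ε * exp (ε * R))) * f' (1 / (d R * R)))
    {R : ℝ} (hR : 0 < R) (hdR : 0 < d R) :
    ∃ φ', HasDerivAt φ φ' R ∧ φ' < 0 := by
  set x := 1 / (d R * R)
  set c := ε * exp (ε * R)
  set Q' := -(1 / fcpu * c) * R + d R
  have hf'x (x : ℝ) : HasDerivAt f' (N0 * log 2 / B * (log 2 / B * 2 ^ (x / B))) x := by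
    rw [show f' = _ from funext hf']
    exact (hasDerivAt_two_rpow_div B x).const_mul _
  have hgx : HasDerivAt g (-x * (N0 * log 2 / B * (log 2 / B * 2 ^ (x / B)))) x := by
    rw [show g = _ from funext hg]
    refine HasDerivAt.sub_id_mul ?_ (hf'x x)
    exact (((hasDerivAt_two_rpow_div B x).sub_const 1).const_mul N0).congr_deriv
      (by rw [hf']; ring)
  have hdx : HasDerivAt d (-(1 / fcpu * c)) R := by
    rw [show d = _ from funext hd]
    exact hasDerivAt_const_sub_exp_sub_exp_div K fcpu ε R
  have hφ' := HasDerivAt.const_mul_comp_add_mul_comp (k := 1 / fcpu)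
    (x := fun R => 1 / (d R * R)) (hf'x x) hgx (hdx.one_div_mul_id (by positivity))
    (hasDerivAt_one_div_sq_mul_exp hε.ne' hR.ne')
  rw [show φ = _ from funext hφ]
  refine ⟨_, hφ', ?_⟩
  have hcross : -Q' / (d R * R) ^ 2 * (1 / (R ^ 2 * ε * exp (ε * R)) - 1 / fcpu * x)
      = -(Q' ^ 2 / (d R ^ 3 * R ^ 4 * c)) := by
    simp only [x, Q', c]
    field_simp
    ring
  have hf'' : 0 < N0 * log 2 / B * (log 2 / B * 2 ^ (x / B)) := by positivity
  have ha' : -(2 + ε * R) / (R ^ 3 * ε * exp (ε * R)) < 0 :=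
    div_neg_of_neg_of_pos (by linarith [mul_pos hε hR]) (by positivity)
  have hp : 0 < f' x := by rw [hf']; positivity
  rw [mul_assoc, hcross]
  nlinarith [div_nonneg (sq_nonneg Q') (by positivity : (0 : ℝ) ≤ d R ^ 3 * R ^ 4 * c),
    mul_pos hf'' (neg_pos.2 ha'), mul_pos hp (neg_pos.2 ha')]

theorem channel_gain_monotone_compression_general
    (N0 B fcpu s T ℓ ε Rmax : ℝ)
    (hN0 : 0 < N0) (hB : 0 < B)
    (hε : 0 < ε)
    (f' g d φ : ℝ → ℝ)
    (hf' : ∀ x, f' x = N0 * Real.log 2 / B * (2 : ℝ) ^ (x / B))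
    (hg : ∀ x, g x = N0 * ((2 : ℝ) ^ (x / B) - 1) - x * f' x)
    (hd : ∀ R, d R = T / ℓ - 1 / s - (Real.exp (ε * R) - Real.exp ε) / fcpu)
    (hφ : ∀ R, φ R =
      (1 / fcpu) * g (1 / (d R * R))
        + (1 / (R ^ 2 * ε * Real.exp (ε * R))) * f' (1 / (d R * R)))
    (hdpos : ∀ R ∈ Icc 1 Rmax, 0 < d R)
    (qc h₁ h₂ R₁ R₂ : ℝ)
    (hqc : 0 < qc) (hh : h₁ ≥ h₂)
    (hR₁ : R₁ ∈ Icc 1 Rmax) (hR₂ : R₂ ∈ Icc 1 Rmax)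
    (hopt₁ : φ R₁ = qc * h₁) (hopt₂ : φ R₂ = qc * h₂) :
    R₁ ≤ R₂ := by
  have hanti : StrictAntiOn φ (Icc 1 Rmax) :=
    strictAntiOn_of_hasDerivAt_neg (convex_Icc 1 Rmax) fun R hR =>
      exists_hasDerivAt_neg_of_optimality hN0 hB hε hf' hg hd hφ (by linarith [hR.1]) (hdpos R hR)
  refine (hanti.le_iff_ge hR₂ hR₁).1 ?_
  rw [hopt₁, hopt₂]
  exact mul_le_mul_of_nonneg_left hh hqc.le

/-- If two sensors share the per-cycle compression energy `q_c` but have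
channel gains `h₁ ≥ h₂ > 0`, and their compression ratios satisfy the
first-order optimality condition `φ(Rᵢ) = q_c hᵢ` of Problem P1-B, then
`R₁ ≤ R₂`.  Here `f(x) = N₀(2^{x/B}−1)`, `f′(x) = (N₀ ln 2/B) 2^{x/B}`,
`g(x) = f(x) − x f′(x)`, `C(R,ε) = e^{εR} − e^{ε}`, and
`d(R) = T/ℓ − 1/s − C(R,ε)/f_cpu` is assumed positive on `[1, R_max]`. -/
theorem channel_gain_monotone_compression
    (N0 B fcpu s T ℓ ε Rmax : ℝ)
    (hN0 : 0 < N0) (hB : 0 < B)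
    (hfcpu : 0 < fcpu) (hs : 0 < s) (hT : 0 < T) (hℓ : 0 < ℓ)
    (hε : 0 < ε) (hRmax : 1 ≤ Rmax)
    (f' g d φ : ℝ → ℝ)
    (hf' : ∀ x, f' x = N0 * Real.log 2 / B * (2 : ℝ) ^ (x / B))
    (hg : ∀ x, g x = N0 * ((2 : ℝ) ^ (x / B) - 1) - x * f' x)
    (hd : ∀ R, d R = T / ℓ - 1 / s - (Real.exp (ε * R) - Real.exp ε) / fcpu)
    (hφ : ∀ R, φ R =
      (1 / fcpu) * g (1 / (d R * R))
        + (1 / (R ^ 2 * ε * Real.exp (ε * R))) * f' (1 / (d R * R)))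
    (hdpos : ∀ R ∈ Icc 1 Rmax, 0 < d R)
    (qc h₁ h₂ R₁ R₂ : ℝ)
    (hqc : 0 < qc) (hh₂ : 0 < h₂) (hh : h₁ ≥ h₂)
    (hR₁ : R₁ ∈ Icc 1 Rmax) (hR₂ : R₂ ∈ Icc 1 Rmax)
    (hopt₁ : φ R₁ = qc * h₁) (hopt₂ : φ R₂ = qc * h₂) :
    R₁ ≤ R₂ :=
  channel_gain_monotone_compression_general N0 B fcpu s T ℓ ε Rmax hN0 hB hε f' g d φ hf' hg hd hφ
    hdpos qc h₁ h₂ R₁ R₂ hqc hh hR₁ hR₂ hopt₁ hopt₂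
end
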